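/- arXiv:2012.11081 — 7 statements merged into one kernel-verified Lean document; each statement's English description precedes it below -/
import Mathlib

section
/- Every lattice triangle in ℝ² (a triangle whose three vertices lie in ℤ² and are not collinear) is unimodularly equivalent to a lattice triangle with vertices (0,0), (b,0) and (m,h), where the integers b, m, h satisfy: b > 0, h > 0, 0 ≤ m < h, b ≥ gcd(m,h), and b ≥ gcd(m−b,h). -/
/-- Two sets of lattice points are unimodularly equivalent if there is an affine map
`L(x) = M x + u` with `M` an integer 2×2 matrix of determinant `±1` and `u ∈ ℤ²`
mapping the first set onto the second. -/
def UnimodEquiv (S₁ S₂ : Set (ℤ × ℤ)) : Prop :=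
  ∃ a b c d u v : ℤ, (a * d - b * c = 1 ∨ a * d - b * c = -1) ∧
    (fun p : ℤ × ℤ => (a * p.1 + b * p.2 + u, c * p.1 + d * p.2 + v)) '' S₁ = S₂

/-- gcd is invariant under unimodular integer transformations. -/
lemma gcd_unimod (A B C D x y : ℤ) (hdet : A * D - B * C = 1 ∨ A * D - B * C = -1) :
    Int.gcd (A * x + B * y) (C * x + D * y) = Int.gcd x y := by
  apply Nat.dvd_antisymm
  · rw [← Int.natCast_dvd_natCast]
    apply Int.dvd_coe_gcd
    · have hx : (A*D - B*C) * (D * (A*x+B*y) - B * (C*x+D*y)) = x := by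
        rcases hdet with h | h
        · linear_combination (x * (A*D - B*C) + x) * h
        · linear_combination (x * (A*D - B*C) - x) * h
      have hd := Dvd.dvd.mul_left (dvd_sub (Dvd.dvd.mul_left (Int.gcd_dvd_left (a := A*x+B*y) (b := C*x+D*y)) D)
        (Dvd.dvd.mul_left (Int.gcd_dvd_right _ _) B)) (A*D - B*C)
      rw [hx] at hd
      exact hd
    · have hy : (A*D - B*C) * (A * (C*x+D*y) - C * (A*x+B*y)) = y := by
        rcases hdet with h | h
        · linear_combination (y * (A*D - B*C) + y) * h
        · linear_combination (y * (A*D - B*C) - y) * h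
      have hd := Dvd.dvd.mul_left (dvd_sub (Dvd.dvd.mul_left (Int.gcd_dvd_right (a := A*x+B*y) (b := C*x+D*y)) A)
        (Dvd.dvd.mul_left (Int.gcd_dvd_left _ _) C)) (A*D - B*C)
      rw [hy] at hd
      exact hd
  · rw [← Int.natCast_dvd_natCast]
    exact Int.dvd_coe_gcd
      (dvd_add (Dvd.dvd.mul_left (Int.gcd_dvd_left _ _) A) (Dvd.dvd.mul_left (Int.gcd_dvd_right _ _) B))
      (dvd_add (Dvd.dvd.mul_left (Int.gcd_dvd_left _ _) C) (Dvd.dvd.mul_left (Int.gcd_dvd_right _ _) D))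

lemma normalize_vec (x1 y1 x2 y2 : ℤ) (hnc : x1 * y2 - y1 * x2 ≠ 0)
    (h1 : (Int.gcd x2 y2 : ℤ) ≤ (Int.gcd x1 y1 : ℤ))
    (h2 : (Int.gcd (x2 - x1) (y2 - y1) : ℤ) ≤ (Int.gcd x1 y1 : ℤ)) :
    ∃ b m h a' b' c' d' : ℤ,
      0 < b ∧ 0 < h ∧ 0 ≤ m ∧ m < h ∧
      (Int.gcd m h : ℤ) ≤ b ∧ (Int.gcd (m - b) h : ℤ) ≤ b ∧
      (a' * d' - b' * c' = 1 ∨ a' * d' - b' * c' = -1) ∧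
      a' * x1 + b' * y1 = b ∧ c' * x1 + d' * y1 = 0 ∧
      a' * x2 + b' * y2 = m ∧ c' * x2 + d' * y2 = h := by
  have hx1y1 : x1 ≠ 0 ∨ y1 ≠ 0 := by
    by_contra hcon
    push_neg at hcon
    apply hnc
    rw [hcon.1, hcon.2]; ring
  have hgpos : (0:ℤ) < Int.gcd x1 y1 := by exact_mod_cast Int.gcd_pos_iff.mpr hx1y1
  obtain ⟨x1', hx1'⟩ : ((Int.gcd x1 y1 : ℤ)) ∣ x1 := (Int.gcd_dvd_left _ _)
  obtain ⟨y1', hy1'⟩ : ((Int.gcd x1 y1 : ℤ)) ∣ y1 := (Int.gcd_dvd_right _ _)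
  set g : ℤ := (Int.gcd x1 y1 : ℤ) with hgdef
  set A := Int.gcdA x1 y1 with hA
  set B := Int.gcdB x1 y1 with hB
  have hbez : g = x1 * A + y1 * B := Int.gcd_eq_gcd_ab x1 y1
  have hbez1 : x1' * A + y1' * B = 1 := by
    have t1 : g * (x1' * A + y1' * B) = x1 * A + y1 * B := by rw [hx1', hy1']; ring
    have hgg : g * (x1' * A + y1' * B) = g * 1 := by rw [t1, ← hbez, mul_one]
    exact mul_left_cancel₀ hgpos.ne' hgg
  have hA1 : A * x1 + B * y1 = g := by linarith [hbez]
  have hC1 : (-y1') * x1 + x1' * y1 = 0 := by rw [hx1', hy1']; ring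
  set m0 : ℤ := A * x2 + B * y2 with hm0def
  set h0 : ℤ := (-y1') * x2 + x1' * y2 with hh0def
  have hh0 : g * h0 = x1 * y2 - y1 * x2 := by rw [hh0def, hx1', hy1']; ring
  have hh0ne : h0 ≠ 0 := by
    intro hz
    apply hnc
    rw [← hh0, hz, mul_zero]
  obtain ⟨s, hs, hspos⟩ : ∃ s : ℤ, (s = 1 ∨ s = -1) ∧ 0 < s * h0 := by
    rcases hh0ne.lt_or_gt with hlt | hlt
    · exact ⟨-1, Or.inr rfl, by linarith⟩
    · exact ⟨1, Or.inl rfl, by linarith⟩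
  set h : ℤ := s * h0 with hhdef
  set k : ℤ := -(m0 / h) with hkdef
  set m : ℤ := m0 % h with hmdef
  have hm_eq : m = m0 + k * h := by rw [hmdef, hkdef, Int.emod_def]; ring
  have hdetS : ∀ C D : ℤ, (s*C) * (s*D) - (s*D) * (s*C) = 0 := by intros; ring
  -- gcd facts
  have hgcdmh : Int.gcd m h = Int.gcd x2 y2 := by
    have e1 : Int.gcd m h = Int.gcd m0 h := by
      have := gcd_unimod 1 k 0 1 m0 h (Or.inl (by ring))
      rw [show (1:ℤ)*m0 + k*h = m by rw [hm_eq]; ring,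
          show (0:ℤ)*m0 + 1*h = h by ring] at this
      exact this
    have hdet2 : A * (s*x1') - B * (s*(-y1')) = s * 1 := by
      rw [← hbez1]; ring
    have e2 : Int.gcd m0 h = Int.gcd x2 y2 := by
      have := gcd_unimod A B (s*(-y1')) (s*x1') x2 y2 (by
        rcases hs with h' | h' <;> [left; right] <;> rw [hdet2, h'] <;> ring)
      rw [show A*x2 + B*y2 = m0 from hm0def.symm,
          show (s*(-y1'))*x2 + (s*x1')*y2 = h by rw [hhdef, hh0def]; ring] at this
      exact this
    rw [e1, e2]
  have hgcdmbh : Int.gcd (m - g) h = Int.gcd (x2 - x1) (y2 - y1) := by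
    have e1 : Int.gcd (m - g) h = Int.gcd (m0 - g) h := by
      have := gcd_unimod 1 k 0 1 (m0 - g) h (Or.inl (by ring))
      rw [show (1:ℤ)*(m0-g) + k*h = m - g by rw [hm_eq]; ring,
          show (0:ℤ)*(m0-g) + 1*h = h by ring] at this
      exact this
    have hdet2 : A * (s*x1') - B * (s*(-y1')) = s * 1 := by
      rw [← hbez1]; ring
    have e2 : Int.gcd (m0 - g) h = Int.gcd (x2 - x1) (y2 - y1) := by
      have := gcd_unimod A B (s*(-y1')) (s*x1') (x2 - x1) (y2 - y1) (by
        rcases hs with h' | h' <;> [left; right] <;> rw [hdet2, h'] <;> ring)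
      rw [show A*(x2-x1) + B*(y2-y1) = m0 - g by rw [hm0def, ← hA1]; ring,
          show (s*(-y1'))*(x2-x1) + (s*x1')*(y2-y1) = h by
            rw [hhdef, hh0def]; linear_combination (-s) * hC1] at this
      exact this
    rw [e1, e2]
  refine ⟨g, m, h, A + k*(s*(-y1')), B + k*(s*x1'), s*(-y1'), s*x1',
    hgpos, hspos, Int.emod_nonneg m0 (ne_of_gt hspos), Int.emod_lt_of_pos m0 hspos,
    by rw [hgcdmh]; exact h1, by rw [hgcdmbh]; exact h2, ?_, ?_, ?_, ?_, ?_⟩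
  · rcases hs with h' | h'
    · left; rw [h']; linear_combination hbez1
    · right; rw [h']; linear_combination -hbez1
  · linear_combination hA1 + (k*s) * hC1
  · linear_combination s * hC1
  · rw [hm_eq, hhdef, hh0def, hm0def]; ring
  · rw [hhdef, hh0def]; ring

lemma key_lemma (p q r : ℤ × ℤ)
    (hnc : (q.1 - p.1) * (r.2 - p.2) - (q.2 - p.2) * (r.1 - p.1) ≠ 0)
    (h1 : (Int.gcd (r.1 - p.1) (r.2 - p.2) : ℤ) ≤ (Int.gcd (q.1 - p.1) (q.2 - p.2) : ℤ))
    (h2 : (Int.gcd (r.1 - q.1) (r.2 - q.2) : ℤ) ≤ (Int.gcd (q.1 - p.1) (q.2 - p.2) : ℤ)) :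
    ∃ b m h : ℤ, 0 < b ∧ 0 < h ∧ 0 ≤ m ∧ m < h ∧
      (Int.gcd m h : ℤ) ≤ b ∧ (Int.gcd (m - b) h : ℤ) ≤ b ∧
      UnimodEquiv {p, q, r} {(0, 0), (b, 0), (m, h)} := by
  obtain ⟨b, m, h, a', b', c', d', hb, hh, hm0, hmh, hgcd1, hgcd2, hdet, e1, e2, e3, e4⟩ :=
    normalize_vec (q.1 - p.1) (q.2 - p.2) (r.1 - p.1) (r.2 - p.2) hnc h1 (by
      rw [show r.1 - p.1 - (q.1 - p.1) = r.1 - q.1 by ring,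
          show r.2 - p.2 - (q.2 - p.2) = r.2 - q.2 by ring]
      exact h2)
  refine ⟨b, m, h, hb, hh, hm0, hmh, hgcd1, hgcd2,
    a', b', c', d', -(a' * p.1 + b' * p.2), -(c' * p.1 + d' * p.2), hdet, ?_⟩
  rw [show ({p, q, r} : Set (ℤ × ℤ)) = insert p (insert q {r}) from rfl,
    Set.image_insert_eq, Set.image_insert_eq, Set.image_singleton]
  have hp : ((a' * p.1 + b' * p.2 + -(a' * p.1 + b' * p.2),
      c' * p.1 + d' * p.2 + -(c' * p.1 + d' * p.2)) : ℤ × ℤ) = ((0 : ℤ), (0 : ℤ)) := by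
    simp only [Prod.mk.injEq]; constructor <;> ring
  have hq : ((a' * q.1 + b' * q.2 + -(a' * p.1 + b' * p.2),
      c' * q.1 + d' * q.2 + -(c' * p.1 + d' * p.2)) : ℤ × ℤ) = (b, (0 : ℤ)) := by
    simp only [Prod.mk.injEq]
    constructor
    · linear_combination e1
    · linear_combination e2
  have hr : ((a' * r.1 + b' * r.2 + -(a' * p.1 + b' * p.2),
      c' * r.1 + d' * r.2 + -(c' * p.1 + d' * p.2)) : ℤ × ℤ) = (m, h) := by
    simp only [Prod.mk.injEq]
    constructor
    · linear_combination e3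
    · linear_combination e4
  rw [hp, hq, hr]

/-- Every lattice triangle is unimodularly equivalent to one with vertices
`(0,0), (b,0), (m,h)` with `b, h > 0`, `0 ≤ m < h`, `b ≥ gcd(m,h)` and `b ≥ gcd(m-b,h)`. -/
theorem every_lattice_triangle_unimod_equiv_normal_form (p q r : ℤ × ℤ)
    (hnc : (q.1 - p.1) * (r.2 - p.2) - (q.2 - p.2) * (r.1 - p.1) ≠ 0) :
    ∃ b m h : ℤ, 0 < b ∧ 0 < h ∧ 0 ≤ m ∧ m < h ∧
      (Int.gcd m h : ℤ) ≤ b ∧ (Int.gcd (m - b) h : ℤ) ≤ b ∧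
      UnimodEquiv {p, q, r} {(0, 0), (b, 0), (m, h)} := by
  set e1 : ℤ := (Int.gcd (q.1 - p.1) (q.2 - p.2) : ℤ) with he1
  set e2 : ℤ := (Int.gcd (r.1 - p.1) (r.2 - p.2) : ℤ) with he2
  set e3 : ℤ := (Int.gcd (r.1 - q.1) (r.2 - q.2) : ℤ) with he3
  have hset1 : ({p, r, q} : Set (ℤ × ℤ)) = {p, q, r} := by
    ext z; simp only [Set.mem_insert_iff, Set.mem_singleton_iff]; tauto
  have hset2 : ({q, r, p} : Set (ℤ × ℤ)) = {p, q, r} := by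
    ext z; simp only [Set.mem_insert_iff, Set.mem_singleton_iff]; tauto
  have gneg : ∀ a b : ℤ, Int.gcd (-a) (-b) = Int.gcd a b := fun a b => by simp [Int.gcd]
  rcases le_or_gt e2 e1 with hA | hA
  · rcases le_or_gt e3 e1 with hB | hB
    · exact key_lemma p q r hnc hA hB
    · -- base edge qr : triple (q, r, p)
      have hnc' : (r.1 - q.1) * (p.2 - q.2) - (r.2 - q.2) * (p.1 - q.1) ≠ 0 := by
        intro hz; apply hnc; linear_combination hz
      have hg1 : (Int.gcd (p.1 - q.1) (p.2 - q.2) : ℤ) = e1 := by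
        rw [show p.1 - q.1 = -(q.1 - p.1) by ring, show p.2 - q.2 = -(q.2 - p.2) by ring,
          gneg, he1]
      have hg2 : (Int.gcd (p.1 - r.1) (p.2 - r.2) : ℤ) = e2 := by
        rw [show p.1 - r.1 = -(r.1 - p.1) by ring, show p.2 - r.2 = -(r.2 - p.2) by ring,
          gneg, he2]
      obtain ⟨b, m, h, c1, c2, c3, c4, c5, c6, hu⟩ :=
        key_lemma q r p hnc' (by rw [hg1]; linarith) (by rw [hg2]; linarith)
      rw [hset2] at hu
      exact ⟨b, m, h, c1, c2, c3, c4, c5, c6, hu⟩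
  · rcases le_or_gt e3 e2 with hB | hB
    · -- base edge pr : triple (p, r, q)
      have hnc' : (r.1 - p.1) * (q.2 - p.2) - (r.2 - p.2) * (q.1 - p.1) ≠ 0 := by
        intro hz; apply hnc; linear_combination -hz
      have hg1 : (Int.gcd (q.1 - r.1) (q.2 - r.2) : ℤ) = e3 := by
        rw [show q.1 - r.1 = -(r.1 - q.1) by ring, show q.2 - r.2 = -(r.2 - q.2) by ring,
          gneg, he3]
      obtain ⟨b, m, h, c1, c2, c3, c4, c5, c6, hu⟩ :=
        key_lemma p r q hnc' (by rw [he1] at hA; exact hA.le) (by rw [hg1]; exact hB)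
      rw [hset1] at hu
      exact ⟨b, m, h, c1, c2, c3, c4, c5, c6, hu⟩
    · -- base edge qr : triple (q, r, p)
      have hnc' : (r.1 - q.1) * (p.2 - q.2) - (r.2 - q.2) * (p.1 - q.1) ≠ 0 := by
        intro hz; apply hnc; linear_combination hz
      have hg1 : (Int.gcd (p.1 - q.1) (p.2 - q.2) : ℤ) = e1 := by
        rw [show p.1 - q.1 = -(q.1 - p.1) by ring, show p.2 - q.2 = -(q.2 - p.2) by ring,
          gneg, he1]
      have hg2 : (Int.gcd (p.1 - r.1) (p.2 - r.2) : ℤ) = e2 := by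
        rw [show p.1 - r.1 = -(r.1 - p.1) by ring, show p.2 - r.2 = -(r.2 - p.2) by ring,
          gneg, he2]
      obtain ⟨b, m, h, c1, c2, c3, c4, c5, c6, hu⟩ :=
        key_lemma q r p hnc' (by rw [hg1]; linarith) (by rw [hg2]; linarith)
      rw [hset2] at hu
      exact ⟨b, m, h, c1, c2, c3, c4, c5, c6, hu⟩
end

section
/- Let T be a lattice triangle in ℝ² with vertices in ℤ², let I be the number of lattice points of ℤ² in the interior of T and B the number of lattice points of ℤ² on the boundary of T. If I ≥ 1, then B ≤ 2I + 7. -/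
/-- The image of a lattice point in the real plane. -/
def toPlane (p : ℤ × ℤ) : ℝ × ℝ := ((p.1 : ℝ), (p.2 : ℝ))


namespace ScottAux

def cr (u v : ℤ × ℤ) : ℤ := u.1 * v.2 - u.2 * v.1

def rcr (u v : ℝ × ℝ) : ℝ := u.1 * v.2 - u.2 * v.1

lemma hull_sub (A B C : ℝ × ℝ) (hd : 0 < rcr (B - A) (C - A)) :
    convexHull ℝ {A, B, C} ⊆
    {x | 0 ≤ rcr (x - A) (C - A) ∧ 0 ≤ rcr (B - A) (x - A) ∧
         rcr (x - A) (C - A) + rcr (B - A) (x - A) ≤ rcr (B - A) (C - A)} := by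
  apply convexHull_min
  · rintro x (rfl | rfl | rfl) <;>
      refine ⟨?_, ?_, ?_⟩ <;>
      simp only [Set.mem_setOf_eq, rcr, Prod.fst_sub, Prod.snd_sub] at hd ⊢ <;>
      nlinarith [hd]
  · rintro x hx y hy s t hs ht hst
    have hts : t = 1 - s := by linarith
    subst hts
    simp only [Set.mem_setOf_eq, rcr, Prod.fst_sub, Prod.snd_sub, Prod.fst_add,
      Prod.snd_add, Prod.smul_fst, Prod.smul_snd, smul_eq_mul] at hx hy ⊢
    refine ⟨by nlinarith [hx.1, hy.1], by nlinarith [hx.2.1, hy.2.1],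
      by nlinarith [hx.2.2, hy.2.2]⟩

end ScottAux

namespace ScottAux

lemma sub_hull (A B C : ℝ × ℝ) (hd : 0 < rcr (B - A) (C - A)) :
    {x | 0 ≤ rcr (x - A) (C - A) ∧ 0 ≤ rcr (B - A) (x - A) ∧
         rcr (x - A) (C - A) + rcr (B - A) (x - A) ≤ rcr (B - A) (C - A)} ⊆
    convexHull ℝ {A, B, C} := by
  intro x hx
  obtain ⟨h1, h2, h3⟩ := hx
  have hd0 : rcr (B - A) (C - A) ≠ 0 := ne_of_gt hd
  have hsum : (rcr (B - A) (C - A) - rcr (x - A) (C - A) - rcr (B - A) (x - A))/(rcr (B - A) (C - A))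
      + rcr (x - A) (C - A) / (rcr (B - A) (C - A))
      + rcr (B - A) (x - A) / (rcr (B - A) (C - A)) = 1 := by
    field_simp
    ring
  have key : Finset.univ.centerMass
      (![ (rcr (B - A) (C - A) - rcr (x - A) (C - A) - rcr (B - A) (x - A))/(rcr (B - A) (C - A)),
          rcr (x - A) (C - A) / (rcr (B - A) (C - A)),
          rcr (B - A) (x - A) / (rcr (B - A) (C - A))])
      (![A, B, C]) ∈ convexHull ℝ ({A, B, C} : Set (ℝ × ℝ)) := by
    apply Finset.centerMass_mem_convexHull
    · intro i _
      fin_cases i <;> simp only [Matrix.cons_val_zero, Matrix.cons_val_one, Matrix.head_cons,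
        Matrix.cons_val_two, Matrix.tail_cons]
      · exact div_nonneg (by linarith) hd.le
      · exact div_nonneg h1 hd.le
      · exact div_nonneg h2 hd.le
    · rw [Fin.sum_univ_three]
      simp only [Matrix.cons_val_zero, Matrix.cons_val_one, Matrix.head_cons,
        Matrix.cons_val_two, Matrix.tail_cons]
      rw [hsum]; exact one_pos
    · intro i _
      fin_cases i <;> simp
  convert key using 1
  rw [Finset.centerMass, Fin.sum_univ_three, Fin.sum_univ_three]
  simp only [Matrix.cons_val_zero, Matrix.cons_val_one, Matrix.head_cons,
    Matrix.cons_val_two, Matrix.tail_cons]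
  rw [hsum, inv_one, one_smul]
  apply Prod.ext <;>
    simp only [rcr, Prod.fst_sub, Prod.snd_sub, Prod.fst_add, Prod.snd_add,
      Prod.smul_fst, Prod.smul_snd, smul_eq_mul] <;>
    · rw [div_mul_eq_mul_div, div_mul_eq_mul_div, div_mul_eq_mul_div, ← add_div,
        ← add_div, eq_comm, div_eq_iff (by simpa [rcr] using hd0)]
      simp only [rcr, Prod.fst_sub, Prod.snd_sub] at *
      ring

end ScottAux


namespace ScottAux

lemma hull_eq (A B C : ℝ × ℝ) (hd : 0 < rcr (B - A) (C - A)) :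
    convexHull ℝ {A, B, C} =
    {x | 0 ≤ rcr (x - A) (C - A) ∧ 0 ≤ rcr (B - A) (x - A) ∧
         rcr (x - A) (C - A) + rcr (B - A) (x - A) ≤ rcr (B - A) (C - A)} :=
  le_antisymm (hull_sub A B C hd) (sub_hull A B C hd)

open Topology Filter

/-- helper: a point where an affine functional (nonneg on `s`) vanishes is not interior. -/
lemma not_mem_interior (x w : ℝ × ℝ) (s : Set (ℝ × ℝ)) (f : ℝ × ℝ → ℝ) (L : ℝ)
    (hs : ∀ y ∈ s, 0 ≤ f y) (hfx : f x ≤ 0)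
    (hlin : ∀ t : ℝ, f (x + t • w) = f x + t * L) (hL : L < 0) :
    x ∉ interior s := by
  intro hx
  have hnh : s ∈ 𝓝 x := mem_interior_iff_mem_nhds.mp hx
  have tends : Filter.Tendsto (fun t : ℝ => x + t • w) (𝓝[>] (0:ℝ)) (𝓝 x) := by
    have hc : Continuous fun t : ℝ => x + t • w := by continuity
    have h0 := hc.tendsto 0
    simp only [zero_smul, add_zero] at h0
    exact h0.mono_left nhdsWithin_le_nhds
  have hev : ∀ᶠ t in 𝓝[>] (0:ℝ), x + t • w ∈ s := tends.eventually hnh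
  have hpos : ∀ᶠ t in 𝓝[>] (0:ℝ), (0:ℝ) < t := self_mem_nhdsWithin
  obtain ⟨t, hmem, ht⟩ := (hev.and hpos).exists
  have := hs _ hmem
  rw [hlin t] at this
  nlinarith

lemma interior_eq (A B C : ℝ × ℝ) (hd : 0 < rcr (B - A) (C - A)) :
    interior (convexHull ℝ {A, B, C}) =
    {x | 0 < rcr (x - A) (C - A) ∧ 0 < rcr (B - A) (x - A) ∧
         rcr (x - A) (C - A) + rcr (B - A) (x - A) < rcr (B - A) (C - A)} := by
  have hCA : ¬((C - A).1 = 0 ∧ (C - A).2 = 0) := by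
    rintro ⟨h1, h2⟩; simp [rcr, h1, h2] at hd
  have hBA : ¬((B - A).1 = 0 ∧ (B - A).2 = 0) := by
    rintro ⟨h1, h2⟩; simp [rcr, h1, h2] at hd
  have hCB : ¬((C - B).1 = 0 ∧ (C - B).2 = 0) := by
    rintro ⟨h1, h2⟩
    have e1 : C.1 = B.1 := by simpa [sub_eq_zero] using h1
    have e2 : C.2 = B.2 := by simpa [sub_eq_zero] using h2
    simp only [rcr, Prod.fst_sub, Prod.snd_sub, e1, e2] at hd
    nlinarith
  apply le_antisymm
  · intro x hx
    have hhull := interior_subset hx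
    rw [hull_eq A B C hd] at hhull
    obtain ⟨h1, h2, h3⟩ := hhull
    refine ⟨?_, ?_, ?_⟩
    · rcases lt_or_eq_of_le h1 with h | h
      · exact h
      exfalso
      refine not_mem_interior x (-(C - A).2, (C - A).1) _ (fun y => rcr (y - A) (C - A))
        (-((C - A).2*(C - A).2 + (C - A).1*(C - A).1)) ?_ (le_of_eq h.symm) ?_ ?_ hx
      · intro y hy; rw [hull_eq A B C hd] at hy; exact hy.1
      · intro t
        simp only [rcr, Prod.fst_sub, Prod.snd_sub, Prod.fst_add, Prod.snd_add,
          Prod.smul_fst, Prod.smul_snd, smul_eq_mul]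
        ring
      · rcases (not_and_or.mp hCA) with h' | h' <;>
          [nlinarith [mul_self_nonneg (C - A).2, mul_self_pos.mpr h'];
           nlinarith [mul_self_nonneg (C - A).1, mul_self_pos.mpr h']]
    · rcases lt_or_eq_of_le h2 with h | h
      · exact h
      exfalso
      refine not_mem_interior x ((B - A).2, -(B - A).1) _ (fun y => rcr (B - A) (y - A))
        (-((B - A).1*(B - A).1 + (B - A).2*(B - A).2)) ?_ (le_of_eq h.symm) ?_ ?_ hx
      · intro y hy; rw [hull_eq A B C hd] at hy; exact hy.2.1
      · intro t
        simp only [rcr, Prod.fst_sub, Prod.snd_sub, Prod.fst_add, Prod.snd_add,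
          Prod.smul_fst, Prod.smul_snd, smul_eq_mul]
        ring
      · rcases (not_and_or.mp hBA) with h' | h' <;>
          [nlinarith [mul_self_nonneg (B - A).2, mul_self_pos.mpr h'];
           nlinarith [mul_self_nonneg (B - A).1, mul_self_pos.mpr h']]
    · rcases lt_or_eq_of_le h3 with h | h
      · exact h
      exfalso
      refine not_mem_interior x ((C - B).2, -(C - B).1) _
        (fun y => rcr (B - A) (C - A) - rcr (y - A) (C - A) - rcr (B - A) (y - A))
        (-((C - B).2*(C - B).2 + (C - B).1*(C - B).1)) ?_ (by linarith) ?_ ?_ hx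
      · intro y hy; rw [hull_eq A B C hd] at hy; linarith [hy.2.2]
      · intro t
        simp only [rcr, Prod.fst_sub, Prod.snd_sub, Prod.fst_add, Prod.snd_add,
          Prod.smul_fst, Prod.smul_snd, smul_eq_mul]
        ring
      · rcases (not_and_or.mp hCB) with h' | h' <;>
          [nlinarith [mul_self_nonneg (C - B).2, mul_self_pos.mpr h'];
           nlinarith [mul_self_nonneg (C - B).1, mul_self_pos.mpr h']]
  · apply interior_maximal
    · intro x hx
      rw [hull_eq A B C hd]
      exact ⟨hx.1.le, hx.2.1.le, hx.2.2.le⟩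
    · have c1 : Continuous fun x : ℝ × ℝ => rcr (x - A) (C - A) := by
        simp only [rcr, Prod.fst_sub, Prod.snd_sub]; fun_prop
      have c2 : Continuous fun x : ℝ × ℝ => rcr (B - A) (x - A) := by
        simp only [rcr, Prod.fst_sub, Prod.snd_sub]; fun_prop
      exact IsOpen.inter (isOpen_lt continuous_const c1) (IsOpen.inter
        (isOpen_lt continuous_const c2) (isOpen_lt (c1.add c2) continuous_const))

lemma frontier_eq (A B C : ℝ × ℝ) (hd : 0 < rcr (B - A) (C - A)) :
    frontier (convexHull ℝ {A, B, C}) =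
    convexHull ℝ {A, B, C} \ interior (convexHull ℝ {A, B, C}) := by
  have : IsClosed (convexHull ℝ ({A, B, C} : Set (ℝ × ℝ))) :=
    (((Set.finite_singleton C).insert B |>.insert A).isCompact_convexHull ℝ).isClosed
  rw [this.frontier_eq]

end ScottAux


namespace ScottAux

/-- primitive vector in the direction of `z` -/
def prim (z : ℤ × ℤ) : ℤ × ℤ := (z.1 / (Int.gcd z.1 z.2 : ℤ), z.2 / (Int.gcd z.1 z.2 : ℤ))

lemma gcd_pos (z : ℤ × ℤ) (hz : z ≠ 0) : 0 < Int.gcd z.1 z.2 := by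
  rw [Int.gcd_pos_iff]
  by_contra h
  push_neg at h
  exact hz (Prod.ext h.1 h.2)

lemma gcd_smul_prim (z : ℤ × ℤ) (hz : z ≠ 0) : (Int.gcd z.1 z.2 : ℤ) • prim z = z := by
  apply Prod.ext <;>
    simp only [prim, Prod.smul_fst, Prod.smul_snd, smul_eq_mul]
  · exact Int.mul_ediv_cancel' (Int.gcd_dvd_left _ _)
  · exact Int.mul_ediv_cancel' (Int.gcd_dvd_right _ _)

lemma prim_gcd_one (z : ℤ × ℤ) (hz : z ≠ 0) : Int.gcd (prim z).1 (prim z).2 = 1 :=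
  Int.gcd_div_gcd_div_gcd (gcd_pos z hz)

lemma prim_ne_zero (z : ℤ × ℤ) (hz : z ≠ 0) : prim z ≠ 0 := by
  intro h
  have := gcd_smul_prim z hz
  rw [h, smul_zero] at this
  exact hz this.symm

lemma exists_smul_of_cr_eq_zero (z w : ℤ × ℤ) (hz : Int.gcd z.1 z.2 = 1) (h : cr w z = 0) :
    ∃ t : ℤ, w = t • z := by
  obtain ⟨m, n, hmn⟩ : ∃ m n : ℤ, m * z.1 + n * z.2 = 1 := by
    rcases Int.isCoprime_iff_gcd_eq_one.mpr hz with ⟨m, n, h'⟩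
    exact ⟨m, n, h'⟩
  have hc : w.1 * z.2 = w.2 * z.1 := by
    have := h
    simp only [cr] at this
    linarith
  refine ⟨m * w.1 + n * w.2, Prod.ext ?_ ?_⟩ <;>
    simp only [Prod.smul_fst, Prod.smul_snd, smul_eq_mul]
  · linear_combination (-w.1) * hmn + n * hc
  · linear_combination (-w.2) * hmn - m * hc

lemma exists_smul_prim (z w : ℤ × ℤ) (hz : z ≠ 0) (h : cr w z = 0) :
    ∃ t : ℤ, w = t • prim z := by
  apply exists_smul_of_cr_eq_zero _ _ (prim_gcd_one z hz)
  have h2 : cr w ((Int.gcd z.1 z.2 : ℤ) • prim z) = cr w z := by rw [gcd_smul_prim z hz]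
  have h3 : cr w ((Int.gcd z.1 z.2 : ℤ) • prim z) = (Int.gcd z.1 z.2 : ℤ) * cr w (prim z) := by
    simp only [cr, Prod.smul_fst, Prod.smul_snd, smul_eq_mul]; ring
  have hg : (0:ℤ) < Int.gcd z.1 z.2 := by exact_mod_cast gcd_pos z hz
  have : (Int.gcd z.1 z.2 : ℤ) * cr w (prim z) = 0 := by rw [← h3, h2, h]
  exact (mul_eq_zero.mp this).resolve_left (ne_of_gt hg) 

lemma smul_inj (z : ℤ × ℤ) (hz : z ≠ 0) {s t : ℤ} (h : s • z = t • z) : s = t := by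
  have h0 : (s - t) • z = 0 := by rw [sub_smul, h, sub_self]
  have h1 : (s - t) * z.1 = 0 := by
    have := congrArg Prod.fst h0; simpa using this
  have h2 : (s - t) * z.2 = 0 := by
    have := congrArg Prod.snd h0; simpa using this
  rcases mul_eq_zero.mp h1 with h' | h'
  · linarith
  rcases mul_eq_zero.mp h2 with h'' | h''
  · linarith
  exact absurd (Prod.ext h' h'') hz

lemma param_inj (p0 z : ℤ × ℤ) (hz : z ≠ 0) :
    Function.Injective (fun t : ℤ => p0 + t • z) := by
  intro s t h
  simp only [add_right_inj] at h
  exact smul_inj z hz h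

end ScottAux

namespace ScottAux

lemma cr_add_left (w w' v : ℤ × ℤ) : cr (w + w') v = cr w v + cr w' v := by
  simp only [cr, Prod.fst_add, Prod.snd_add]; ring

lemma cr_sub_left (w w' v : ℤ × ℤ) : cr (w - w') v = cr w v - cr w' v := by
  simp only [cr, Prod.fst_sub, Prod.snd_sub]; ring

lemma cr_smul_left (t : ℤ) (w v : ℤ × ℤ) : cr (t • w) v = t * cr w v := by
  simp only [cr, Prod.smul_fst, Prod.smul_snd, smul_eq_mul]; ring

lemma cr_add_right (v w w' : ℤ × ℤ) : cr v (w + w') = cr v w + cr v w' := by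
  simp only [cr, Prod.fst_add, Prod.snd_add]; ring

lemma cr_sub_right (v w w' : ℤ × ℤ) : cr v (w - w') = cr v w - cr v w' := by
  simp only [cr, Prod.fst_sub, Prod.snd_sub]; ring

lemma cr_smul_right (t : ℤ) (v w : ℤ × ℤ) : cr v (t • w) = t * cr v w := by
  simp only [cr, Prod.smul_fst, Prod.smul_snd, smul_eq_mul]; ring

lemma cr_self (w : ℤ × ℤ) : cr w w = 0 := by simp only [cr]; ring

lemma cr_anti (w v : ℤ × ℤ) : cr w v = - cr v w := by simp only [cr]; ring

lemma cr_gcd_smul (u v : ℤ × ℤ) (hv : v ≠ 0) :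
    cr u v = (Int.gcd v.1 v.2 : ℤ) * cr u (prim v) := by
  conv_lhs => rw [← gcd_smul_prim v hv]
  rw [cr_smul_right]

lemma cr_gcd_smul_left (u v : ℤ × ℤ) (hu : u ≠ 0) :
    cr u v = (Int.gcd u.1 u.2 : ℤ) * cr (prim u) v := by
  conv_lhs => rw [← gcd_smul_prim u hu]
  rw [cr_smul_left]

/-- The half-open fundamental parallelogram of `u, v` contains exactly `cr u v` lattice
points. -/
lemma P_count (u v : ℤ × ℤ) (hD : 0 < cr u v) :
    {p : ℤ × ℤ | 0 ≤ cr p v ∧ cr p v < cr u v ∧ 0 ≤ cr u p ∧ cr u p < cr u v}.ncard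
      = (cr u v).toNat := by
  have hv : v ≠ 0 := by
    intro h; rw [h] at hD; simp [cr] at hD
  set D := cr u v with hDdef
  set g : ℤ := (Int.gcd v.1 v.2 : ℤ) with hgdef
  have hg : 0 < g := by rw [hgdef]; exact_mod_cast gcd_pos v hv
  set v' := prim v with hv'def
  have hv'0 : v' ≠ 0 := prim_ne_zero v hv
  set h : ℤ := cr u v' with hhdef
  have hgh : D = g * h := cr_gcd_smul u v hv
  have hh : 0 < h := by
    rcases le_or_gt h 0 with h' | h'
    · exfalso; nlinarith only [hgh, hD, hg, h']
    · exact h'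
  -- Bezout vector
  obtain ⟨w0, hw0⟩ : ∃ w0 : ℤ × ℤ, cr w0 v = g := by
    refine ⟨(Int.gcdB v.1 v.2, -Int.gcdA v.1 v.2), ?_⟩
    simp only [cr]
    have := Int.gcd_eq_gcd_ab v.1 v.2
    linarith [this]
  set e : ℤ := cr u w0 with hedef
  have hv'v : cr v' v = 0 := by
    conv_lhs => rw [← gcd_smul_prim v hv]
    rw [cr_smul_right, cr_self, mul_zero]
  set Θ : ℤ × ℤ → ℤ × ℤ := fun jk => jk.1 • w0 + (jk.2 - (jk.1 * e) / h) • v' with hΘ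
  have crΘv : ∀ jk : ℤ × ℤ, cr (Θ jk) v = jk.1 * g := by
    intro jk
    rw [hΘ]
    simp only [cr_add_left, cr_smul_left, hw0, hv'v, mul_zero, add_zero]
  have cruΘ : ∀ jk : ℤ × ℤ, cr u (Θ jk) = jk.1 * e % h + jk.2 * h := by
    intro jk
    rw [hΘ]
    simp only [cr_add_right, cr_smul_right, ← hedef, ← hhdef]
    have := Int.mul_ediv_add_emod (jk.1 * e) h
    ring_nf
    linarith [this]
  have hinj : Function.Injective Θ := by
    intro jk jk' heq
    have h1 : jk.1 * g = jk'.1 * g := by rw [← crΘv jk, ← crΘv jk', heq]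
    have hj : jk.1 = jk'.1 := mul_right_cancel₀ (ne_of_gt hg) h1
    have h2 : (jk.2 - (jk.1 * e) / h) • v' = (jk'.2 - (jk'.1 * e) / h) • v' := by
      have := heq
      rw [hΘ] at this
      simp only [hj] at this ⊢
      exact add_left_cancel this
    have := smul_inj v' hv'0 h2
    rw [hj] at this
    exact Prod.ext hj (by omega)
  have hset : {p : ℤ × ℤ | 0 ≤ cr p v ∧ cr p v < D ∧ 0 ≤ cr u p ∧ cr u p < D}
      = Θ '' ↑(Finset.Ico (0:ℤ) h ×ˢ Finset.Ico (0:ℤ) g) := by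
    ext p
    simp only [Set.mem_setOf_eq, Set.mem_image, Finset.coe_product, Set.mem_prod,
      Finset.coe_Ico, Set.mem_Ico]
    constructor
    · rintro ⟨hb0, hbD, hc0, hcD⟩
      have hgdvd : g ∣ cr p v := by
        have h1 : g ∣ v.1 := Int.gcd_dvd_left _ _
        have h2 : g ∣ v.2 := Int.gcd_dvd_right _ _
        simp only [cr]
        exact dvd_sub (Dvd.dvd.mul_left h2 p.1) (Dvd.dvd.mul_left h1 p.2)
      set j : ℤ := cr p v / g with hjdef
      have hj : cr p v = j * g := by
        rw [hjdef, Int.ediv_mul_cancel hgdvd]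
      have hwcr : cr (p - j • w0) v = 0 := by
        rw [cr_sub_left, cr_smul_left, hw0, hj, sub_self]
      obtain ⟨t, ht⟩ := exists_smul_prim v (p - j • w0) hv hwcr
      have hp : p = j • w0 + t • v' := by
        rw [← ht]; ring
      have hγ : cr u p = j * e + t * h := by
        rw [hp, cr_add_right, cr_smul_right, cr_smul_right, ← hedef, ← hhdef]
      have hq := Int.mul_ediv_add_emod (j * e) h
      have hr0 : 0 ≤ (j * e) % h := Int.emod_nonneg _ (ne_of_gt hh)
      have hrh : (j * e) % h < h := Int.emod_lt_of_pos _ hh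
      refine ⟨(j, t + (j * e) / h), ⟨⟨?_, ?_⟩, ?_, ?_⟩, ?_⟩
      · -- 0 ≤ j
        exact Int.ediv_nonneg hb0 hg.le
      · -- j < h
        have : j * g < h * g := by rw [← hj]; rw [hgh] at hbD; linarith [hbD]
        exact lt_of_mul_lt_mul_right this hg.le
      · -- 0 ≤ t + (j*e)/h
        by_contra hneg
        push_neg at hneg
        have h1 : t + (j * e) / h ≤ -1 := by omega
        have h2 : cr u p = (t + (j * e) / h) * h + (j * e) % h := by
          rw [hγ]; linarith [hq]
        nlinarith only [hc0, h2, hrh, h1, hh]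
      · -- t + (j*e)/h < g
        have h2 : cr u p = (t + (j * e) / h) * h + (j * e) % h := by
          rw [hγ]; linarith [hq]
        by_contra hge
        push_neg at hge
        have : g * h ≤ (t + (j * e) / h) * h := by
          apply mul_le_mul_of_nonneg_right ?_ hh.le
          · exact hge
        rw [hgh] at hcD
        nlinarith only [hcD, h2, hr0, this]
      · -- Θ (j, t + (j*e)/h) = p
        rw [hΘ]
        simp only
        rw [hp]
        congr 1
        congr 1
        omega
    · rintro ⟨jk, ⟨⟨hj0, hjh⟩, hk0, hkg⟩, rfl⟩
      have hr0 : 0 ≤ (jk.1 * e) % h := Int.emod_nonneg _ (ne_of_gt hh)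
      have hrh : (jk.1 * e) % h < h := Int.emod_lt_of_pos _ hh
      refine ⟨?_, ?_, ?_, ?_⟩
      · rw [crΘv]; positivity
      · rw [crΘv, hgh]
        calc jk.1 * g < h * g := by
              apply mul_lt_mul_of_pos_right hjh hg
          _ = g * h := by ring
      · rw [cruΘ]; positivity
      · rw [cruΘ, hgh]
        nlinarith only [hrh, hkg, hh, hr0, mul_le_mul_of_nonneg_right (by omega : jk.2 ≤ g - 1) hh.le]
  rw [hset, Set.ncard_image_of_injective _ hinj, Set.ncard_coe_finset]
  rw [Finset.card_product, Int.card_Ico, Int.card_Ico]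
  simp only [sub_zero]
  have h1 : ((h).toNat : ℤ) = h := Int.toNat_of_nonneg hh.le
  have h2 : ((g).toNat : ℤ) = g := Int.toNat_of_nonneg hg.le
  have key : ((h.toNat * g.toNat : ℕ) : ℤ) = D := by
    push_cast [h1, h2]
    rw [hgh]; ring
  omega


end ScottAux

namespace ScottAux

lemma h_le {t s h : ℤ} (hh : 0 < h) (ht : t * h ≤ s * h) : t ≤ s :=
  le_of_mul_le_mul_right ht hh

lemma h_nonneg {t h : ℤ} (hh : 0 < h) (ht : 0 ≤ t * h) : 0 ≤ t :=
  h_le hh (by simpa using ht)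

lemma h_lt {t s h : ℤ} (hh : 0 < h) (ht : t * h < s * h) : t < s :=
  lt_of_mul_lt_mul_right ht hh.le

/-- The key arithmetic inequality behind Scott's theorem (after Pick's theorem). -/
lemma arith (g1 g2 g3 D : ℤ) (hg1 : 1 ≤ g1) (hg2 : 1 ≤ g2) (hg3 : 1 ≤ g3)
    (h21 : g2 ≤ g1) (h32 : g3 ≤ g2)
    (hdvd : g1 ∣ D) (h12 : g1 * g2 ≤ D) (hsum : g1 + g2 + g3 ≤ D) :
    2 * (g1 + g2 + g3) ≤ D + 9 := by
  rcases le_or_gt 2 g2 with h2 | h2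
  · nlinarith only [mul_nonneg (sub_nonneg.mpr h21) (by linarith : (0:ℤ) ≤ g2 - 2),
      sq_nonneg (g2 - 3), h12, h32, h2]
  · have hg2' : g2 = 1 := by omega
    have hg3' : g3 = 1 := by omega
    obtain ⟨k, hk⟩ := hdvd
    have hk2 : 2 ≤ k := by
      by_contra hlt
      push_neg at hlt
      have hk1 : k ≤ 1 := by omega
      have := mul_le_mul_of_nonneg_left hk1 (by linarith : (0:ℤ) ≤ g1)
      rw [mul_one] at this
      rw [hk] at hsum
      omega
    have h2g : 2 * g1 ≤ g1 * k := by nlinarith only [hk2, hg1, mul_le_mul_of_nonneg_left hk2 (by linarith : (0:ℤ) ≤ g1)]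
    omega

end ScottAux

namespace ScottAux

lemma comp_ident1 (u v w : ℤ × ℤ) : cr u v * w.1 = cr w v * u.1 + cr u w * v.1 := by
  simp only [cr]; ring

lemma comp_ident2 (u v w : ℤ × ℤ) : cr u v * w.2 = cr w v * u.2 + cr u w * v.2 := by
  simp only [cr]; ring

set_option maxHeartbeats 1000000 in
/-- main integer-side theorem -/
theorem int_scott (u v : ℤ × ℤ) (hD : 0 < cr u v)
    (hI1 : 1 ≤ {p : ℤ × ℤ | 0 < cr p v ∧ 0 < cr u p ∧ cr p v + cr u p < cr u v}.ncard) :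
    ({p : ℤ × ℤ | 0 ≤ cr p v ∧ 0 ≤ cr u p ∧ cr p v + cr u p ≤ cr u v} \
      {p : ℤ × ℤ | 0 < cr p v ∧ 0 < cr u p ∧ cr p v + cr u p < cr u v}).ncard ≤
      2 * {p : ℤ × ℤ | 0 < cr p v ∧ 0 < cr u p ∧ cr p v + cr u p < cr u v}.ncard + 7 := by
  set D := cr u v with hDdef
  set Io := {p : ℤ × ℤ | 0 < cr p v ∧ 0 < cr u p ∧ cr p v + cr u p < D} with hIo
  set Tri := {p : ℤ × ℤ | 0 ≤ cr p v ∧ 0 ≤ cr u p ∧ cr p v + cr u p ≤ D} with hTri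
  -- nondegeneracy
  have hu : u ≠ 0 := by intro h; rw [hDdef, h] at hD; simp [cr] at hD
  have hv : v ≠ 0 := by intro h; rw [hDdef, h] at hD; simp [cr] at hD
  have hw : v - u ≠ 0 := by
    intro h
    have hvu : v = u := by
      have := congrArg (· + u) h; simpa [sub_add_cancel] using this
    rw [hDdef, hvu, cr_self] at hD; exact lt_irrefl 0 hD
  have huv : u ≠ v := by
    intro h; rw [hDdef, h, cr_self] at hD; exact lt_irrefl 0 hD
  -- gcds and primitive vectors
  set g1 : ℤ := (Int.gcd u.1 u.2 : ℤ) with hg1def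
  set g2 : ℤ := (Int.gcd v.1 v.2 : ℤ) with hg2def
  set g3 : ℤ := (Int.gcd (v - u).1 (v - u).2 : ℤ) with hg3def
  have hg1 : 0 < g1 := by rw [hg1def]; exact_mod_cast gcd_pos u hu
  have hg2 : 0 < g2 := by rw [hg2def]; exact_mod_cast gcd_pos v hv
  have hg3 : 0 < g3 := by rw [hg3def]; exact_mod_cast gcd_pos _ hw
  set u' := prim u with hu'def
  set v' := prim v with hv'def
  set w' := prim (v - u) with hw'def
  have hu'0 : u' ≠ 0 := prim_ne_zero u hu
  have hv'0 : v' ≠ 0 := prim_ne_zero v hv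
  have hw'0 : w' ≠ 0 := prim_ne_zero _ hw
  have hgu : g1 • u' = u := gcd_smul_prim u hu
  have hgv : g2 • v' = v := gcd_smul_prim v hv
  have hgw : g3 • w' = v - u := gcd_smul_prim _ hw
  set h1 : ℤ := cr u' v with hh1def
  set h2 : ℤ := cr u v' with hh2def
  set h3 : ℤ := cr u w' with hh3def
  have hgh1 : D = g1 * h1 := cr_gcd_smul_left u v hu
  have hgh2 : D = g2 * h2 := cr_gcd_smul u v hv
  have hgh3 : D = g3 * h3 := by
    have huw : cr u (v - u) = D := by rw [cr_sub_right, cr_self, sub_zero]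
    have := cr_gcd_smul u (v - u) hw
    rw [huw] at this
    exact this
  have hh1 : 0 < h1 := by
    rcases le_or_gt h1 0 with h' | h'
    · exfalso; nlinarith only [hgh1, hD, hg1, h']
    · exact h'
  have hh2 : 0 < h2 := by
    rcases le_or_gt h2 0 with h' | h'
    · exfalso; nlinarith only [hgh2, hD, hg2, h']
    · exact h'
  have hh3 : 0 < h3 := by
    rcases le_or_gt h3 0 with h' | h'
    · exfalso; nlinarith only [hgh3, hD, hg3, h']
    · exact h'
  -- auxiliary cross product values
  have hcuu' : cr u u' = 0 := by
    have : cr u u = g1 * cr u u' := cr_gcd_smul u u hu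
    rw [cr_self] at this
    exact ((mul_eq_zero.mp this.symm).resolve_left (ne_of_gt hg1))
  have hcv'v : cr v' v = 0 := by
    have h' : cr v' v = cr v' (g2 • v') := by rw [hgv]
    rw [h', cr_smul_right, cr_self, mul_zero]
  have hcw'v : cr w' v = -h3 := by
    have hwv : cr (v - u) v = -D := by
      rw [cr_sub_left, cr_self, zero_sub, hDdef]
    have h' : cr (v - u) v = g3 * cr w' v := by
      conv_lhs => rw [← hgw, cr_smul_left]
    rw [hwv] at h'
    have : g3 * cr w' v = g3 * (-h3) := by rw [← h', hgh3]; ring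
    exact mul_left_cancel₀ (ne_of_gt hg3) this
  -- injectivity of the coordinate map
  have pinj : ∀ p q : ℤ × ℤ, cr p v = cr q v → cr u p = cr u q → p = q := by
    intro p q hb hc
    have hb0 : cr (p - q) v = 0 := by rw [cr_sub_left, hb, sub_self]
    have hc0 : cr u (p - q) = 0 := by rw [cr_sub_right, hc, sub_self]
    have e1 := comp_ident1 u v (p - q)
    have e2 := comp_ident2 u v (p - q)
    rw [hb0, hc0] at e1 e2
    simp only [zero_mul, mul_zero, add_zero, zero_add] at e1 e2
    have hD0 : D ≠ 0 := ne_of_gt hD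
    have e1' : cr u v * (p - q).1 = 0 := by linarith [e1]
    have e2' : cr u v * (p - q).2 = 0 := by linarith [e2]
    have p1 : (p - q).1 = 0 := by
      rcases mul_eq_zero.mp e1' with h' | h'
      · exact absurd h' hD0
      · exact h'
    have p2 : (p - q).2 = 0 := by
      rcases mul_eq_zero.mp e2' with h' | h'
      · exact absurd h' hD0
      · exact h'
    have : p - q = 0 := Prod.ext p1 p2
    exact sub_eq_zero.mp this
  -- vertex identifications
  have hvert_a : ∀ p : ℤ × ℤ, cr p v = 0 → cr u p = 0 → p = 0 := by
    intro p hb hc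
    apply pinj p 0
    · rw [hb]; simp [cr]
    · rw [hc]; simp [cr]
  have hvert_b : ∀ p : ℤ × ℤ, cr p v = cr u v → cr u p = 0 → p = u := by
    intro p hb hc
    apply pinj p u
    · exact hb
    · rw [hc, cr_self]
  have hvert_c : ∀ p : ℤ × ℤ, cr p v = 0 → cr u p = cr u v → p = v := by
    intro p hb hc
    apply pinj p v
    · rw [hb, cr_self]
    · exact hc
  -- finiteness
  have hmapinj : Set.InjOn (fun p : ℤ × ℤ => (cr p v, cr u p))
      ((fun p : ℤ × ℤ => (cr p v, cr u p)) ⁻¹' (Set.Icc 0 D ×ˢ Set.Icc 0 D)) := by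
    intro p _ q _ h
    simp only [Prod.mk.injEq] at h
    exact pinj p q h.1 h.2
  have hprefin := ((Set.finite_Icc (0:ℤ) D).prod (Set.finite_Icc (0:ℤ) D)).preimage hmapinj
  have hTrifin : Tri.Finite := by
    apply hprefin.subset
    intro p hp
    rw [hTri] at hp
    simp only [Set.mem_setOf_eq] at hp
    simp only [Set.mem_preimage, Set.mem_prod, Set.mem_Icc]
    omega
  have hIoTri : Io ⊆ Tri := by
    intro p hp
    rw [hIo] at hp
    rw [hTri]
    simp only [Set.mem_setOf_eq] at hp ⊢
    omega
  have hIofin : Io.Finite := hTrifin.subset hIoTri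
  -- segment sets
  set S1 := {p : ℤ × ℤ | 0 ≤ cr p v ∧ cr p v ≤ D ∧ cr u p = 0 ∧ p ≠ u} with hS1def
  set S2 := {p : ℤ × ℤ | cr p v = 0 ∧ 0 ≤ cr u p ∧ cr u p ≤ D ∧ p ≠ 0} with hS2def
  set S3 := {p : ℤ × ℤ | 0 ≤ cr p v ∧ 0 ≤ cr u p ∧ cr p v + cr u p = D ∧ p ≠ v} with hS3def
  set Ebc := {p : ℤ × ℤ | 0 ≤ cr p v ∧ 0 ≤ cr u p ∧ cr p v + cr u p = D} with hEbcdef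
  -- parametrization of S1
  have hS1eq : S1 = (fun t : ℤ => t • u') '' ↑(Finset.Ico (0:ℤ) g1) := by
    ext p
    rw [hS1def]
    simp only [Set.mem_setOf_eq, Set.mem_image, Finset.coe_Ico, Set.mem_Ico]
    constructor
    · rintro ⟨hb, hbD, hc, hne⟩
      obtain ⟨t, ht⟩ := exists_smul_prim u p hu (by rw [cr_anti, hc, neg_zero])
      rw [← hu'def] at ht
      have hβ : cr p v = t * h1 := by rw [ht, cr_smul_left, hh1def]
      refine ⟨t, ⟨?_, ?_⟩, ht.symm⟩
      · exact h_nonneg hh1 (by rw [← hβ]; exact hb)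
      · have hle : t ≤ g1 := h_le hh1 (by rw [← hβ, ← hgh1]; exact hbD)
        rcases lt_or_eq_of_le hle with h' | h'
        · exact h'
        · exfalso; apply hne; rw [ht, h', hgu]
    · rintro ⟨t, ⟨ht0, htg⟩, rfl⟩
      have hβ : cr (t • u') v = t * h1 := by rw [cr_smul_left, hh1def]
      refine ⟨?_, ?_, ?_, ?_⟩
      · rw [hβ]; positivity
      · rw [hβ, hgh1]; exact mul_le_mul_of_nonneg_right htg.le hh1.le
      · rw [cr_smul_right, hcuu', mul_zero]
      · intro h
        rw [← hgu] at h
        have := smul_inj u' hu'0 h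
        omega
  -- parametrization of S2
  have hS2eq : S2 = (fun t : ℤ => t • v') '' ↑(Finset.Ioc (0:ℤ) g2) := by
    ext p
    rw [hS2def]
    simp only [Set.mem_setOf_eq, Set.mem_image, Finset.coe_Ioc, Set.mem_Ioc]
    constructor
    · rintro ⟨hb, hc, hcD, hne⟩
      obtain ⟨t, ht⟩ := exists_smul_prim v p hv hb
      rw [← hv'def] at ht
      have hγ : cr u p = t * h2 := by rw [ht, cr_smul_right, hh2def]
      refine ⟨t, ⟨?_, ?_⟩, ht.symm⟩
      · have ht0 : 0 ≤ t := h_nonneg hh2 (by rw [← hγ]; exact hc)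
        rcases lt_or_eq_of_le ht0 with h' | h'
        · exact h'
        · exfalso; apply hne; rw [ht, ← h', zero_smul]
      · exact h_le hh2 (by rw [← hγ, ← hgh2]; exact hcD)
    · rintro ⟨t, ⟨ht0, htg⟩, rfl⟩
      have hγ : cr u (t • v') = t * h2 := by rw [cr_smul_right, hh2def]
      refine ⟨?_, ?_, ?_, ?_⟩
      · rw [cr_smul_left, hcv'v, mul_zero]
      · rw [hγ]; positivity
      · rw [hγ, hgh2]; exact mul_le_mul_of_nonneg_right htg hh2.le
      · intro h
        have h0 : t • v' = (0:ℤ) • v' := by rw [h, zero_smul]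
        have := smul_inj v' hv'0 h0
        omega
  -- parametrization of S3
  have hcrshift : ∀ p : ℤ × ℤ, cr (p - u) (v - u) = cr p v + cr u p - cr u v := by
    intro p; simp only [cr, Prod.fst_sub, Prod.snd_sub]; ring
  have hS3param : ∀ p : ℤ × ℤ, cr p v + cr u p = D →
      ∃ t : ℤ, p = u + t • w' ∧ cr p v = D - t * h3 ∧ cr u p = t * h3 := by
    intro p hsum
    have h0 : cr (p - u) (v - u) = 0 := by rw [hcrshift]; omega
    obtain ⟨t, ht⟩ := exists_smul_prim (v - u) (p - u) hw h0
    rw [← hw'def] at ht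
    have hp : p = u + t • w' := by rw [← ht]; ring
    have hγ : cr u p = t * h3 := by
      rw [hp, cr_add_right, cr_self, cr_smul_right, ← hh3def, zero_add]
    exact ⟨t, hp, by omega, hγ⟩
  have hβγS3 : ∀ t : ℤ, cr (u + t • w') v = D - t * h3 ∧ cr u (u + t • w') = t * h3 := by
    intro t
    constructor
    · rw [cr_add_left, cr_smul_left, hcw'v, ← hDdef]; ring
    · rw [cr_add_right, cr_self, cr_smul_right, ← hh3def, zero_add]
  have hS3ne : ∀ t : ℤ, (u + t • w' ≠ v ↔ t ≠ g3) := by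
    intro t
    constructor
    · intro hne heq
      apply hne
      rw [heq, hgw]
      ring
    · intro hne heq
      apply hne
      have h' : t • w' = g3 • w' := by
        rw [hgw]
        have := congrArg (· - u) heq
        simpa using this
      exact smul_inj w' hw'0 h'
  have hS3eq : S3 = (fun t : ℤ => u + t • w') '' ↑(Finset.Ico (0:ℤ) g3) := by
    ext p
    rw [hS3def]
    simp only [Set.mem_setOf_eq, Set.mem_image, Finset.coe_Ico, Set.mem_Ico]
    constructor
    · rintro ⟨hb, hc, hsum, hne⟩
      obtain ⟨t, hp, hβ, hγ⟩ := hS3param p hsum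
      refine ⟨t, ⟨?_, ?_⟩, hp.symm⟩
      · exact h_nonneg hh3 (by omega)
      · have hle : t ≤ g3 := h_le hh3 (by rw [← hgh3]; omega)
        have : t ≠ g3 := by
          rw [← hS3ne t, ← hp]; exact hne
        omega
    · rintro ⟨t, ⟨ht0, htg⟩, rfl⟩
      obtain ⟨hβ, hγ⟩ := hβγS3 t
      have hth : t * h3 ≤ g3 * h3 := mul_le_mul_of_nonneg_right htg.le hh3.le
      have hth0 : 0 ≤ t * h3 := by positivity
      refine ⟨by omega, by omega, by omega, ?_⟩
      rw [hS3ne t]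
      omega
  have hEbceq : Ebc = (fun t : ℤ => u + t • w') '' ↑(Finset.Icc (0:ℤ) g3) := by
    ext p
    rw [hEbcdef]
    simp only [Set.mem_setOf_eq, Set.mem_image, Finset.coe_Icc, Set.mem_Icc]
    constructor
    · rintro ⟨hb, hc, hsum⟩
      obtain ⟨t, hp, hβ, hγ⟩ := hS3param p hsum
      refine ⟨t, ⟨?_, ?_⟩, hp.symm⟩
      · exact h_nonneg hh3 (by omega)
      · exact h_le hh3 (by rw [← hgh3]; omega)
    · rintro ⟨t, ⟨ht0, htg⟩, rfl⟩
      obtain ⟨hβ, hγ⟩ := hβγS3 t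
      have hth : t * h3 ≤ g3 * h3 := mul_le_mul_of_nonneg_right htg hh3.le
      have hth0 : 0 ≤ t * h3 := by positivity
      exact ⟨by omega, by omega, by omega⟩
  -- cardinalities of the segment sets
  have hinj1 : Function.Injective (fun t : ℤ => t • u') := fun s t h => smul_inj u' hu'0 h
  have hinj2 : Function.Injective (fun t : ℤ => t • v') := fun s t h => smul_inj v' hv'0 h
  have hinj3 : Function.Injective (fun t : ℤ => u + t • w') := param_inj u w' hw'0
  have hS1card : S1.ncard = g1.toNat := by
    rw [hS1eq, Set.ncard_image_of_injective _ hinj1, Set.ncard_coe_finset, Int.card_Ico]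
    simp
  have hS2card : S2.ncard = g2.toNat := by
    rw [hS2eq, Set.ncard_image_of_injective _ hinj2, Set.ncard_coe_finset, Int.card_Ioc]
    simp
  have hS3card : S3.ncard = g3.toNat := by
    rw [hS3eq, Set.ncard_image_of_injective _ hinj3, Set.ncard_coe_finset, Int.card_Ico]
    simp
  have hEbccard : Ebc.ncard = g3.toNat + 1 := by
    rw [hEbceq, Set.ncard_image_of_injective _ hinj3, Set.ncard_coe_finset, Int.card_Icc]
    omega
  have hfinS1 : S1.Finite := by
    rw [hS1eq]; exact (Finset.Ico (0:ℤ) g1).finite_toSet.image _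
  have hfinS2 : S2.Finite := by
    rw [hS2eq]; exact (Finset.Ioc (0:ℤ) g2).finite_toSet.image _
  have hfinS3 : S3.Finite := by
    rw [hS3eq]; exact (Finset.Ico (0:ℤ) g3).finite_toSet.image _
  -- boundary decomposition
  have hBdeq : Tri \ Io = S1 ∪ S2 ∪ S3 := by
    ext p
    rw [hTri, hIo, hS1def, hS2def, hS3def]
    simp only [Set.mem_diff, Set.mem_setOf_eq, Set.mem_union]
    constructor
    · rintro ⟨⟨hb, hc, hs⟩, hni⟩
      have trich : cr u p = 0 ∨ cr p v = 0 ∨ cr p v + cr u p = D := by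
        by_contra hcon
        push_neg at hcon
        exact hni ⟨by omega, by omega, by omega⟩
      rcases trich with h0 | h0 | h0
      · by_cases hpu : p = u
        · refine Or.inr ⟨hb, hc, ?_, ?_⟩
          · rw [hpu, cr_self, add_zero, hDdef]
          · rw [hpu]; exact huv
        · exact Or.inl (Or.inl ⟨hb, by omega, h0, hpu⟩)
      · by_cases hp0 : p = 0
        · refine Or.inl (Or.inl ⟨hb, by omega, ?_, ?_⟩)
          · rw [hp0]; simp [cr]
          · rw [hp0]; exact fun hh => hu hh.symm
        · exact Or.inl (Or.inr ⟨h0, hc, by omega, hp0⟩)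
      · by_cases hpv : p = v
        · refine Or.inl (Or.inr ⟨?_, hc, by omega, ?_⟩)
          · rw [hpv, cr_self]
          · rw [hpv]; exact hv
        · exact Or.inr ⟨hb, hc, h0, hpv⟩
    · rintro ((⟨hb, hbD, hc, hne⟩ | ⟨hb, hc, hcD, hne⟩) | ⟨hb, hc, hs, hne⟩)
      · exact ⟨⟨hb, by omega, by omega⟩, fun hcon => by omega⟩
      · exact ⟨⟨by omega, hc, by omega⟩, fun hcon => by omega⟩
      · exact ⟨⟨hb, hc, by omega⟩, fun hcon => by omega⟩
  -- disjointness
  have hd12 : Disjoint S1 S2 := by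
    rw [Set.disjoint_left]
    rintro p h1' h2'
    rw [hS1def] at h1'
    rw [hS2def] at h2'
    simp only [Set.mem_setOf_eq] at h1' h2'
    exact h2'.2.2.2 (hvert_a p h2'.1 h1'.2.2.1)
  have hd13 : Disjoint S1 S3 := by
    rw [Set.disjoint_left]
    rintro p h1' h3'
    rw [hS1def] at h1'
    rw [hS3def] at h3'
    simp only [Set.mem_setOf_eq] at h1' h3'
    apply h1'.2.2.2
    apply hvert_b p ?_ h1'.2.2.1
    rw [← hDdef]
    have := h3'.2.2.1
    have := h1'.2.2.1
    omega
  have hd23 : Disjoint S2 S3 := by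
    rw [Set.disjoint_left]
    rintro p h2' h3'
    rw [hS2def] at h2'
    rw [hS3def] at h3'
    simp only [Set.mem_setOf_eq] at h2' h3'
    apply h3'.2.2.2
    apply hvert_c p h2'.1 ?_
    rw [← hDdef]
    have := h3'.2.2.1
    have := h2'.1
    omega
  have hBdcard : (Tri \ Io).ncard = g1.toNat + g2.toNat + g3.toNat := by
    rw [hBdeq, Set.ncard_union_eq (Set.disjoint_union_left.mpr ⟨hd13, hd23⟩)
      (hfinS1.union hfinS2) hfinS3, Set.ncard_union_eq hd12 hfinS1 hfinS2,
      hS1card, hS2card, hS3card]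
  -- Pick's theorem via the fundamental parallelogram
  set P := {p : ℤ × ℤ | 0 ≤ cr p v ∧ cr p v < cr u v ∧ 0 ≤ cr u p ∧ cr u p < cr u v}
    with hPdef
  have hPcard : P.ncard = D.toNat := P_count u v hD
  set Q1 := {p : ℤ × ℤ | 0 ≤ cr p v ∧ 0 ≤ cr u p ∧ cr p v + cr u p < D} with hQ1def
  set Q2 := {p : ℤ × ℤ | 0 ≤ cr p v ∧ 0 ≤ cr u p ∧ cr p v + cr u p = D ∧
      0 < cr p v ∧ 0 < cr u p} with hQ2def
  set Q3 := {p : ℤ × ℤ | 0 ≤ cr p v ∧ cr p v < D ∧ 0 ≤ cr u p ∧ cr u p < D ∧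
      D < cr p v + cr u p} with hQ3def
  have hσβ : ∀ p : ℤ × ℤ, cr (u + v - p) v = cr u v - cr p v := by
    intro p
    simp only [cr, Prod.fst_add, Prod.snd_add, Prod.fst_sub, Prod.snd_sub]
    ring
  have hσγ : ∀ p : ℤ × ℤ, cr u (u + v - p) = cr u v - cr u p := by
    intro p
    simp only [cr, Prod.fst_add, Prod.snd_add, Prod.fst_sub, Prod.snd_sub]
    ring
  have hQ3eq : Q3 = (fun p : ℤ × ℤ => u + v - p) '' Io := by
    ext p
    rw [hQ3def, hIo]
    simp only [Set.mem_setOf_eq, Set.mem_image]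
    constructor
    · rintro ⟨hb, hbD, hc, hcD, hsum⟩
      refine ⟨u + v - p, ⟨?_, ?_, ?_⟩, by ring⟩
      · have := hσβ p; omega
      · have := hσγ p; omega
      · have h1' := hσβ p
        have h2' := hσγ p
        omega
    · rintro ⟨q, ⟨i1, i2, i3⟩, rfl⟩
      have h1' := hσβ q
      have h2' := hσγ q
      refine ⟨by omega, by omega, by omega, by omega, by omega⟩
  have hQ3card : Q3.ncard = Io.ncard := by
    rw [hQ3eq]
    apply Set.ncard_image_of_injective
    intro p q h
    exact sub_right_injective h
  have hQ2eq : Q2 = (fun t : ℤ => u + t • w') '' ↑(Finset.Ico (1:ℤ) g3) := by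
    ext p
    rw [hQ2def]
    simp only [Set.mem_setOf_eq, Set.mem_image, Finset.coe_Ico, Set.mem_Ico]
    constructor
    · rintro ⟨hb, hc, hsum, hb0, hc0⟩
      obtain ⟨t, hp, hβ, hγ⟩ := hS3param p hsum
      refine ⟨t, ⟨?_, ?_⟩, hp.symm⟩
      · have h0' : 0 < t * h3 := by omega
        have : 0 < t := by
          rcases le_or_gt t 0 with h' | h'
          · exfalso; nlinarith only [h0', h', hh3]
          · exact h'
        omega
      · have h0' : t * h3 < g3 * h3 := by rw [← hgh3]; omega
        exact h_lt hh3 h0'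
    · rintro ⟨t, ⟨ht0, htg⟩, rfl⟩
      obtain ⟨hβ, hγ⟩ := hβγS3 t
      have hth : t * h3 < g3 * h3 := mul_lt_mul_of_pos_right htg hh3
      have hth0 : 0 < t * h3 := by positivity
      rw [← hgh3] at hth
      refine ⟨by omega, by omega, by omega, by omega, by omega⟩
  have hQ2card : Q2.ncard = (g3 - 1).toNat := by
    rw [hQ2eq, Set.ncard_image_of_injective _ hinj3, Set.ncard_coe_finset, Int.card_Ico]
  -- decompositions of P and Tri
  have hfinP : P.Finite := by
    apply hprefin.subset
    intro p hp
    rw [hPdef] at hp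
    simp only [Set.mem_setOf_eq] at hp
    simp only [Set.mem_preimage, Set.mem_prod, Set.mem_Icc]
    rw [← hDdef] at hp
    omega
  have hfinQ1 : Q1.Finite := hfinP.subset (by
    intro p hp
    rw [hQ1def] at hp
    rw [hPdef]
    simp only [Set.mem_setOf_eq] at hp ⊢
    rw [← hDdef]
    omega)
  have hfinQ2 : Q2.Finite := by
    rw [hQ2eq]; exact (Finset.Ico (1:ℤ) g3).finite_toSet.image _
  have hfinQ3 : Q3.Finite := by
    rw [hQ3eq]; exact hIofin.image _
  have hPeq : P = Q1 ∪ Q2 ∪ Q3 := by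
    ext p
    rw [hPdef, hQ1def, hQ2def, hQ3def]
    simp only [Set.mem_setOf_eq, Set.mem_union]
    rw [← hDdef]
    omega
  have hdQ12 : Disjoint Q1 Q2 := by
    rw [Set.disjoint_left]
    rintro p h1' h2'
    rw [hQ1def] at h1'
    rw [hQ2def] at h2'
    simp only [Set.mem_setOf_eq] at h1' h2'
    omega
  have hdQ13 : Disjoint Q1 Q3 := by
    rw [Set.disjoint_left]
    rintro p h1' h2'
    rw [hQ1def] at h1'
    rw [hQ3def] at h2'
    simp only [Set.mem_setOf_eq] at h1' h2'
    omega
  have hdQ23 : Disjoint Q2 Q3 := by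
    rw [Set.disjoint_left]
    rintro p h1' h2'
    rw [hQ2def] at h1'
    rw [hQ3def] at h2'
    simp only [Set.mem_setOf_eq] at h1' h2'
    omega
  have hPsum : P.ncard = Q1.ncard + Q2.ncard + Q3.ncard := by
    rw [hPeq, Set.ncard_union_eq (Set.disjoint_union_left.mpr ⟨hdQ13, hdQ23⟩)
      (hfinQ1.union hfinQ2) hfinQ3, Set.ncard_union_eq hdQ12 hfinQ1 hfinQ2]
  have hTriQ : Tri = Q1 ∪ Ebc := by
    ext p
    rw [hTri, hQ1def, hEbcdef]
    simp only [Set.mem_setOf_eq, Set.mem_union]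
    omega
  have hdQ1E : Disjoint Q1 Ebc := by
    rw [Set.disjoint_left]
    rintro p h1' h2'
    rw [hQ1def] at h1'
    rw [hEbcdef] at h2'
    simp only [Set.mem_setOf_eq] at h1' h2'
    omega
  have hfinEbc : Ebc.Finite := by
    rw [hEbceq]; exact (Finset.Icc (0:ℤ) g3).finite_toSet.image _
  have hTricard : Tri.ncard = Q1.ncard + Ebc.ncard := by
    rw [hTriQ, Set.ncard_union_eq hdQ1E hfinQ1 hfinEbc]
  have hTriIo : Tri.ncard = Io.ncard + (Tri \ Io).ncard := by
    rw [← Set.ncard_union_eq Set.disjoint_sdiff_right hIofin (hTrifin.diff)]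
    rw [Set.union_diff_cancel hIoTri]
  -- Pick's theorem
  have hPick : D.toNat + 2 = 2 * Io.ncard + (Tri \ Io).ncard := by
    omega
  -- divisibility and product bounds
  have hdvd1 : g1 ∣ D := ⟨h1, hgh1⟩
  have hdvd2 : g2 ∣ D := ⟨h2, hgh2⟩
  have hdvd3 : g3 ∣ D := ⟨h3, hgh3⟩
  have hsplit12 : D = g1 * g2 * cr u' v' := by
    rw [hgh1, hh1def, cr_gcd_smul u' v hv, ← hg2def, ← hv'def]
    ring
  have hc12 : 1 ≤ cr u' v' := by
    by_contra hcon
    push_neg at hcon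
    have h'' : cr u' v' ≤ 0 := by omega
    nlinarith only [hsplit12, hD, mul_pos hg1 hg2, h'']
  have hp12 : g1 * g2 ≤ D := by nlinarith only [hsplit12, hc12, mul_pos hg1 hg2]
  have hsplit13 : D = g1 * g3 * cr u' w' := by
    have huw : cr u (v - u) = D := by rw [cr_sub_right, cr_self, sub_zero, hDdef]
    have e1 : cr u (v - u) = g1 * cr u' (v - u) := cr_gcd_smul_left u (v - u) hu
    have e2 : cr u' (v - u) = g3 * cr u' w' := by
      rw [cr_gcd_smul u' (v - u) hw, ← hg3def, ← hw'def]
    rw [← huw, e1, e2]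
    ring
  have hc13 : 1 ≤ cr u' w' := by
    by_contra hcon
    push_neg at hcon
    have h'' : cr u' w' ≤ 0 := by omega
    nlinarith only [hsplit13, hD, mul_pos hg1 hg3, h'']
  have hp13 : g1 * g3 ≤ D := by nlinarith only [hsplit13, hc13, mul_pos hg1 hg3]
  have hsplit23 : D = g2 * g3 * (- cr w' v') := by
    have hwv : cr (v - u) v = -D := by
      rw [cr_sub_left, cr_self, zero_sub, hDdef]
    have e1 : cr (v - u) v = g3 * cr w' v := by
      conv_lhs => rw [← hgw, cr_smul_left]
    have e2 : cr w' v = g2 * cr w' v' := by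
      rw [cr_gcd_smul w' v hv, ← hg2def, ← hv'def]
    have : -D = g3 * (g2 * cr w' v') := by rw [← e2, ← e1, hwv]
    linarith [this]
  have hc23 : 1 ≤ - cr w' v' := by
    by_contra hcon
    push_neg at hcon
    have h'' : - cr w' v' ≤ 0 := by omega
    nlinarith only [hsplit23, hD, mul_pos hg2 hg3, h'']
  have hp23 : g2 * g3 ≤ D := by nlinarith only [hsplit23, hc23, mul_pos hg2 hg3]
  have hp21 : g2 * g1 ≤ D := by rw [mul_comm]; exact hp12
  have hp31 : g3 * g1 ≤ D := by rw [mul_comm]; exact hp13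
  have hp32 : g3 * g2 ≤ D := by rw [mul_comm]; exact hp23
  -- sum bound from I ≥ 1
  have hsumB : g1 + g2 + g3 ≤ D := by omega
  -- sorted application of the arithmetic lemma
  have key : 2 * (g1 + g2 + g3) ≤ D + 9 := by
    rcases le_total g1 g2 with h12 | h12 <;> rcases le_total g2 g3 with h23 | h23 <;>
      rcases le_total g1 g3 with h13 | h13
    · linarith only [arith g3 g2 g1 D (by omega) (by omega) (by omega) h23 h12 hdvd3 hp32 (by linarith only [hsumB])]
    · linarith only [arith g3 g2 g1 D (by omega) (by omega) (by omega) h23 h12 hdvd3 hp32 (by linarith only [hsumB])]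
    · linarith only [arith g2 g3 g1 D (by omega) (by omega) (by omega) h23 h13 hdvd2 hp23 (by linarith only [hsumB])]
    · linarith only [arith g2 g1 g3 D (by omega) (by omega) (by omega) h12 h13 hdvd2 hp21 (by linarith only [hsumB])]
    · linarith only [arith g3 g1 g2 D (by omega) (by omega) (by omega) h13 h12 hdvd3 hp31 (by linarith only [hsumB])]
    · linarith only [arith g1 g3 g2 D (by omega) (by omega) (by omega) h13 h23 hdvd1 hp13 (by linarith only [hsumB])]
    · linarith only [arith g1 g2 g3 D (by omega) (by omega) (by omega) h12 h23 hdvd1 hp12 (by linarith only [hsumB])]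
    · linarith only [arith g1 g2 g3 D (by omega) (by omega) (by omega) h12 h23 hdvd1 hp12 (by linarith only [hsumB])]
  omega



end ScottAux


namespace ScottAux

lemma rcr_cast (p q r s : ℤ × ℤ) :
    rcr (toPlane p - toPlane q) (toPlane r - toPlane s) = ((cr (p - q) (r - s) : ℤ) : ℝ) := by
  simp only [rcr, cr, toPlane, Prod.fst_sub, Prod.snd_sub]
  push_cast
  ring

theorem main_pos (a b c : ℤ × ℤ) (hD : 0 < cr (b - a) (c - a)) (I B : ℕ)
    (hI : I = {p : ℤ × ℤ |
      toPlane p ∈ interior (convexHull ℝ {toPlane a, toPlane b, toPlane c})}.ncard)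
    (hB : B = {p : ℤ × ℤ |
      toPlane p ∈ frontier (convexHull ℝ {toPlane a, toPlane b, toPlane c})}.ncard)
    (hI1 : 1 ≤ I) : B ≤ 2 * I + 7 := by
  have hd : 0 < rcr (toPlane b - toPlane a) (toPlane c - toPlane a) := by
    rw [rcr_cast]
    exact_mod_cast hD
  have hIset : {p : ℤ × ℤ |
      toPlane p ∈ interior (convexHull ℝ {toPlane a, toPlane b, toPlane c})}
      = (fun q => q + a) '' {p : ℤ × ℤ |
          0 < cr p (c - a) ∧ 0 < cr (b - a) p ∧ cr p (c - a) + cr (b - a) p < cr (b - a) (c - a)} := by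
    ext p
    rw [Set.mem_setOf_eq, interior_eq _ _ _ hd]
    simp only [Set.mem_setOf_eq, Set.mem_image]
    rw [rcr_cast, rcr_cast, rcr_cast]
    constructor
    · rintro ⟨h1, h2, h3⟩
      refine ⟨p - a, ⟨?_, ?_, ?_⟩, by ring⟩
      · exact_mod_cast h1
      · exact_mod_cast h2
      · exact_mod_cast h3
    · rintro ⟨q, ⟨h1, h2, h3⟩, rfl⟩
      simp only [add_sub_cancel_right]
      refine ⟨?_, ?_, ?_⟩
      · exact_mod_cast h1
      · exact_mod_cast h2
      · exact_mod_cast h3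
  have hBset : {p : ℤ × ℤ |
      toPlane p ∈ frontier (convexHull ℝ {toPlane a, toPlane b, toPlane c})}
      = (fun q => q + a) '' ({p : ℤ × ℤ |
          0 ≤ cr p (c - a) ∧ 0 ≤ cr (b - a) p ∧ cr p (c - a) + cr (b - a) p ≤ cr (b - a) (c - a)} \
        {p : ℤ × ℤ |
          0 < cr p (c - a) ∧ 0 < cr (b - a) p ∧ cr p (c - a) + cr (b - a) p < cr (b - a) (c - a)}) := by
    ext p
    rw [Set.mem_setOf_eq, frontier_eq _ _ _ hd, Set.mem_diff, interior_eq _ _ _ hd,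
      hull_eq _ _ _ hd]
    simp only [Set.mem_setOf_eq, Set.mem_image, Set.mem_diff]
    rw [rcr_cast, rcr_cast, rcr_cast]
    constructor
    · rintro ⟨⟨h1, h2, h3⟩, hni⟩
      refine ⟨p - a, ⟨⟨?_, ?_, ?_⟩, ?_⟩, by ring⟩
      · exact_mod_cast h1
      · exact_mod_cast h2
      · exact_mod_cast h3
      · rintro ⟨i1, i2, i3⟩
        exact hni ⟨by exact_mod_cast i1, by exact_mod_cast i2, by exact_mod_cast i3⟩
    · rintro ⟨q, ⟨⟨h1, h2, h3⟩, hni⟩, rfl⟩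
      simp only [add_sub_cancel_right]
      refine ⟨⟨?_, ?_, ?_⟩, ?_⟩
      · exact_mod_cast h1
      · exact_mod_cast h2
      · exact_mod_cast h3
      · rintro ⟨i1, i2, i3⟩
        exact hni ⟨by exact_mod_cast i1, by exact_mod_cast i2, by exact_mod_cast i3⟩
  have hinj : Function.Injective (fun q : ℤ × ℤ => q + a) := add_left_injective a
  rw [hIset, Set.ncard_image_of_injective _ hinj] at hI
  rw [hBset, Set.ncard_image_of_injective _ hinj] at hB
  rw [hI, hB]
  exact int_scott (b - a) (c - a) hD (by rw [← hI]; exact hI1)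

end ScottAux


/-- Scott's inequality for lattice triangles: if `T` is a lattice triangle with `I ≥ 1`
interior lattice points and `B` boundary lattice points, then `B ≤ 2 I + 7`. -/
theorem scott_inequality_for_lattice_triangles (a b c : ℤ × ℤ)
    (hnc : (b.1 - a.1) * (c.2 - a.2) - (b.2 - a.2) * (c.1 - a.1) ≠ 0)
    (I B : ℕ)
    (hI : I = {p : ℤ × ℤ |
      toPlane p ∈ interior (convexHull ℝ {toPlane a, toPlane b, toPlane c})}.ncard)
    (hB : B = {p : ℤ × ℤ |
      toPlane p ∈ frontier (convexHull ℝ {toPlane a, toPlane b, toPlane c})}.ncard)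
    (hI1 : 1 ≤ I) :
    B ≤ 2 * I + 7 := by
  have hcr : (b.1 - a.1) * (c.2 - a.2) - (b.2 - a.2) * (c.1 - a.1)
      = ScottAux.cr (b - a) (c - a) := by
    simp only [ScottAux.cr, Prod.fst_sub, Prod.snd_sub]
  rw [hcr] at hnc
  rcases lt_or_gt_of_ne hnc with hneg | hpos
  · have hset : ({toPlane a, toPlane b, toPlane c} : Set (ℝ × ℝ))
        = {toPlane a, toPlane c, toPlane b} := by
      rw [Set.pair_comm (toPlane b) (toPlane c)]
    rw [hset] at hI hB
    have hD' : 0 < ScottAux.cr (c - a) (b - a) := by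
      have h' := ScottAux.cr_anti (c - a) (b - a)
      linarith
    exact ScottAux.main_pos a c b hD' I B hI hB hI1
  · exact ScottAux.main_pos a b c hpos I B hI hB hI1
end

section
/- If a lattice triangle with vertices a, b, c ∈ ℤ² is clean, i.e., each of the three edge vectors b−a, c−a, c−b has coprime coordinates (so no side contains a lattice point other than its endpoints), then the determinant of the 2×2 matrix with columns b−a and c−a is odd. Equivalently, twice the area of a clean lattice triangle is an odd integer. -/
lemma zmod2_aux : ∀ x1 x2 y1 y2 : ZMod 2,
    ¬(x1 = 0 ∧ x2 = 0) → ¬(y1 = 0 ∧ y2 = 0) → ¬(y1 - x1 = 0 ∧ y2 - x2 = 0) →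
    x1 * y2 - x2 * y1 = 1 := by decide

lemma gcd_one_not_both_zero (x y : ℤ) (h : Int.gcd x y = 1) :
    ¬((x : ZMod 2) = 0 ∧ (y : ZMod 2) = 0) := by
  rintro ⟨hx, hy⟩
  rw [ZMod.intCast_zmod_eq_zero_iff_dvd] at hx hy
  have : (2 : ℤ) ∣ (Int.gcd x y : ℤ) := Int.dvd_coe_gcd hx hy
  rw [h] at this
  norm_num at this

/-- A clean lattice triangle (all edge vectors have coprime coordinates) has odd
determinant, i.e. twice its area is an odd integer. -/
theorem clean_triangle_det_odd (a b c : ℤ × ℤ)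
    (hnc : (b.1 - a.1) * (c.2 - a.2) - (b.2 - a.2) * (c.1 - a.1) ≠ 0)
    (hab : Int.gcd (b.1 - a.1) (b.2 - a.2) = 1)
    (hac : Int.gcd (c.1 - a.1) (c.2 - a.2) = 1)
    (hbc : Int.gcd (c.1 - b.1) (c.2 - b.2) = 1) :
    Odd ((b.1 - a.1) * (c.2 - a.2) - (b.2 - a.2) * (c.1 - a.1)) := by
  rw [← Int.not_even_iff_odd, even_iff_two_dvd, show (2:ℤ) = ((2:ℕ):ℤ) from rfl,
    ← ZMod.intCast_zmod_eq_zero_iff_dvd]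
  have h1 := gcd_one_not_both_zero _ _ hab
  have h2 := gcd_one_not_both_zero _ _ hac
  have h3 := gcd_one_not_both_zero _ _ hbc
  have key := zmod2_aux ((b.1 - a.1 : ℤ) : ZMod 2) ((b.2 - a.2 : ℤ) : ZMod 2)
    ((c.1 - a.1 : ℤ) : ZMod 2) ((c.2 - a.2 : ℤ) : ZMod 2) h1 h2 ?_
  · push_cast
    push_cast at key
    rw [key]
    decide
  · intro ⟨hx, hy⟩
    apply h3
    constructor
    · rw [show (c.1 - b.1 : ℤ) = (c.1 - a.1) - (b.1 - a.1) by ring]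
      push_cast
      push_cast at hx
      linear_combination hx
    · rw [show (c.2 - b.2 : ℤ) = (c.2 - a.2) - (b.2 - a.2) by ring]
      push_cast
      push_cast at hy
      linear_combination hy
end

section
/- The arithmetic function imph is multiplicative: if m₁, m₂ are positive integers with gcd(m₁,m₂) = 1, then imph(m₁·m₂) = imph(m₁)·imph(m₂). -/
/-- `imph n` is the number of `x` with `1 ≤ x ≤ n` such that both `x - 1` and `x`
are coprime to `n`. -/
def imph (n : ℕ) : ℕ :=
  ((Finset.Icc 1 n).filter (fun x => Nat.gcd (x - 1) n = 1 ∧ Nat.gcd x n = 1)).card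

lemma prod_isUnit_iff {α β : Type*} [Monoid α] [Monoid β] {p : α × β} :
    IsUnit p ↔ IsUnit p.1 ∧ IsUnit p.2 := by
  constructor
  · intro h
    exact ⟨h.map (MonoidHom.fst _ _), h.map (MonoidHom.snd _ _)⟩
  · rintro ⟨⟨u, hu⟩, ⟨v, hv⟩⟩
    exact ⟨⟨(↑u, ↑v), (↑u⁻¹, ↑v⁻¹), by simp [Prod.ext_iff], by simp [Prod.ext_iff]⟩,
      by simp [Prod.ext_iff, hu, hv]⟩

lemma imph_eq_card (n : ℕ) (hn : 0 < n) :
    imph n = Nat.card {z : ZMod n // IsUnit z ∧ IsUnit (z - 1)} := by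
  haveI : NeZero n := ⟨hn.ne'⟩
  classical
  rw [Nat.card_eq_fintype_card, Fintype.card_subtype]
  unfold imph
  refine Finset.card_bij' (fun x _ => ((x : ZMod n)))
    (fun z _ => if z = 0 then n else z.val) ?_ ?_ ?_ ?_
  · intro x hx
    simp only [Finset.mem_filter, Finset.mem_Icc] at hx
    obtain ⟨⟨h1, h2⟩, hg1, hg2⟩ := hx
    simp only [Finset.mem_filter, Finset.mem_univ, true_and]
    constructor
    · exact (ZMod.isUnit_iff_coprime x n).mpr hg2
    · have : ((x - 1 : ℕ) : ZMod n) = (x : ZMod n) - 1 := by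
        push_cast [Nat.cast_sub h1]; ring
      rw [← this]
      exact (ZMod.isUnit_iff_coprime (x - 1) n).mpr hg1
  · intro z hz
    simp only [Finset.mem_filter, Finset.mem_univ, true_and] at hz
    obtain ⟨hu, hu1⟩ := hz
    by_cases h0 : z = 0
    · subst h0
      have hn1 : n = 1 := by
        have := (ZMod.isUnit_iff_coprime 0 n).mp (by simpa using hu)
        simpa [Nat.Coprime] using this
      subst hn1; simp
    · simp only [if_neg h0, Finset.mem_filter, Finset.mem_Icc]
      have hval : 1 ≤ z.val := Nat.one_le_iff_ne_zero.mpr (fun h => h0 ((ZMod.val_eq_zero z).mp h))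
      refine ⟨⟨hval, (ZMod.val_lt z).le⟩, ?_, ?_⟩
      · have : ((z.val - 1 : ℕ) : ZMod n) = z - 1 := by
          rw [Nat.cast_sub hval, ZMod.natCast_rightInverse z]; norm_num
        exact (ZMod.isUnit_iff_coprime (z.val - 1) n).mp (this ▸ hu1)
      · exact (ZMod.isUnit_iff_coprime z.val n).mp
          (by rw [ZMod.natCast_rightInverse z]; exact hu)
  · intro x hx
    simp only [Finset.mem_filter, Finset.mem_Icc] at hx
    obtain ⟨⟨h1, h2⟩, hg1, hg2⟩ := hx
    by_cases h0 : (x : ZMod n) = 0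
    · have : n ∣ x := (ZMod.natCast_eq_zero_iff x n).mp h0
      have : x = n := Nat.le_antisymm h2 (Nat.le_of_dvd (by omega) this)
      simp [h0, this]
    · have hlt : x < n := by
        rcases Nat.lt_or_ge x n with h | h
        · exact h
        · exfalso; apply h0
          have : x = n := le_antisymm h2 h
          simp [this]
      simp [if_neg h0, ZMod.val_natCast, Nat.mod_eq_of_lt hlt]
  · intro z hz
    by_cases h0 : z = 0
    · simp [h0]
    · simp [if_neg h0, ZMod.natCast_rightInverse z]

/-- `imph` is multiplicative. -/
theorem imph_multiplicative (m₁ m₂ : ℕ) (h₁ : 0 < m₁) (h₂ : 0 < m₂)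
    (hco : Nat.Coprime m₁ m₂) : imph (m₁ * m₂) = imph m₁ * imph m₂ := by
  haveI : NeZero m₁ := ⟨h₁.ne'⟩
  haveI : NeZero m₂ := ⟨h₂.ne'⟩
  rw [imph_eq_card _ (Nat.mul_pos h₁ h₂), imph_eq_card _ h₁, imph_eq_card _ h₂,
    ← Nat.card_prod]
  apply Nat.card_congr
  let e := ZMod.chineseRemainder hco
  calc {z : ZMod (m₁ * m₂) // IsUnit z ∧ IsUnit (z - 1)}
      ≃ {p : ZMod m₁ × ZMod m₂ // (IsUnit p.1 ∧ IsUnit (p.1 - 1)) ∧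
          (IsUnit p.2 ∧ IsUnit (p.2 - 1))} := by
        refine e.toEquiv.subtypeEquiv fun z => ?_
        have h1 : IsUnit z ↔ IsUnit (e z) :=
          ⟨fun h => h.map e, fun h => by simpa using h.map e.symm⟩
        have h2 : IsUnit (z - 1) ↔ IsUnit (e z - 1) := by
          rw [show e z - 1 = e (z - 1) by simp [map_sub]]
          exact ⟨fun h => h.map e, fun h => by simpa using h.map e.symm⟩
        rw [h1, h2, prod_isUnit_iff, prod_isUnit_iff]
        simp only [Prod.fst_sub, Prod.snd_sub, Prod.fst_one, Prod.snd_one]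
        tauto
    _ ≃ _ := Equiv.subtypeProdEquivProd (p := fun a => IsUnit a ∧ IsUnit (a - 1)) (q := fun b => IsUnit b ∧ IsUnit (b - 1))
end

section
/- Let h > 0 and let m, x be integers with gcd(m,h) = gcd(m−1,h) = 1. Let T_m be the triangle with vertices (0,0), (1,0), (m,h) and T_x the triangle with vertices (0,0), (1,0), (x,h). If T_x is unimodularly equivalent to T_m, then the residue of x modulo h equals one of the six elements m, m⁻¹, 1−m, 1−m⁻¹, (1−m)⁻¹, (1−m⁻¹)⁻¹ of ℤ/hℤ (all inverses taken modulo h, which exist since m and m−1 are units modulo h). -/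
private lemma detAB {a b c d : ℤ} (hdet : a * d - b * c = 1 ∨ a * d - b * c = -1)
    (ha : a = 0) (hc : c = 0) : False := by
  subst ha; subst hc; simp at hdet

private lemma detAux (h : ℕ) (hh : 0 < h) (s : ℤ) {a b c d : ℤ}
    (hdet : a * d - b * c = 1 ∨ a * d - b * c = -1)
    (e1 : a * s + b * (h : ℤ) = 0) (e2 : c * s + d * (h : ℤ) = 0) : False := by
  have key : (a * d - b * c) * (h : ℤ) = 0 := by linear_combination a * e2 - c * e1
  rcases hdet with hd | hd <;> rw [hd] at key <;> omega

private lemma zmod_eq_inv {n : ℕ} {a x : ZMod n} (ha : IsUnit a) (hx : a * x = 1) :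
    x = a⁻¹ := by
  have h1 : a⁻¹ * a = 1 := ZMod.inv_mul_of_unit a ha
  calc x = (a⁻¹ * a) * x := by rw [h1, one_mul]
    _ = a⁻¹ * (a * x) := by ring
    _ = a⁻¹ := by rw [hx, mul_one]

private lemma int_cast_isUnit {h : ℕ} {m : ℤ} (hm : Int.gcd m h = 1) :
    IsUnit (m : ZMod h) := by
  obtain ⟨p, q, hpq⟩ := Int.isCoprime_iff_gcd_eq_one.mpr hm
  have h2 : ((p * m + q * (h : ℤ) : ℤ) : ZMod h) = ((1 : ℤ) : ZMod h) := by rw [hpq]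
  push_cast at h2
  rw [ZMod.natCast_self] at h2
  exact IsUnit.of_mul_eq_one (p : ZMod h) (by linear_combination h2)

/-- If the triangle with vertices `(0,0), (1,0), (x,h)` is unimodularly equivalent to
the one with vertices `(0,0), (1,0), (m,h)`, then modulo `h` we have
`x ∈ {m, m⁻¹, 1 - m, 1 - m⁻¹, (1 - m)⁻¹, (1 - m⁻¹)⁻¹}`. -/
theorem equiv_clean_triangle_residues (h : ℕ) (hh : 0 < h) (m x : ℤ)
    (hm : Int.gcd m h = 1) (hm1 : Int.gcd (m - 1) h = 1)
    (hequiv : UnimodEquiv {((0 : ℤ), (0 : ℤ)), (1, 0), (x, (h : ℤ))}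
      {((0 : ℤ), (0 : ℤ)), (1, 0), (m, (h : ℤ))}) :
    (x : ZMod h) = (m : ZMod h) ∨
    (x : ZMod h) = (m : ZMod h)⁻¹ ∨
    (x : ZMod h) = 1 - (m : ZMod h) ∨
    (x : ZMod h) = 1 - (m : ZMod h)⁻¹ ∨
    (x : ZMod h) = (1 - (m : ZMod h))⁻¹ ∨
    (x : ZMod h) = (1 - (m : ZMod h)⁻¹)⁻¹ := by
  obtain ⟨a, b, c, d, u, v, hdet, himg⟩ := hequiv
  have hmu : IsUnit (m : ZMod h) := int_cast_isUnit hm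
  have hinv : (m : ZMod h)⁻¹ * (m : ZMod h) = 1 := ZMod.inv_mul_of_unit _ hmu
  have hm1u : IsUnit ((m : ZMod h) - 1) := by
    have h1 := int_cast_isUnit (h := h) hm1
    have h2 : ((m - 1 : ℤ) : ZMod h) = (m : ZMod h) - 1 := by push_cast; ring
    rwa [h2] at h1
  have h1mu : IsUnit (1 - (m : ZMod h)) := by
    have := hm1u.neg
    simpa [neg_sub] using this
  have hA : ((a*0+b*0+u, c*0+d*0+v) : ℤ×ℤ) ∈ ({((0:ℤ),(0:ℤ)), (1,0), (m,(h:ℤ))} : Set (ℤ×ℤ)) := by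
    rw [← himg]; exact ⟨(0,0), by simp, rfl⟩
  have hB : ((a*1+b*0+u, c*1+d*0+v) : ℤ×ℤ) ∈ ({((0:ℤ),(0:ℤ)), (1,0), (m,(h:ℤ))} : Set (ℤ×ℤ)) := by
    rw [← himg]; exact ⟨(1,0), by simp, rfl⟩
  have hC : ((a*x+b*h+u, c*x+d*h+v) : ℤ×ℤ) ∈ ({((0:ℤ),(0:ℤ)), (1,0), (m,(h:ℤ))} : Set (ℤ×ℤ)) := by
    rw [← himg]; exact ⟨(x,(h:ℤ)), by simp, rfl⟩
  simp only [Set.mem_insert_iff, Set.mem_singleton_iff, Prod.mk.injEq, mul_zero, mul_one,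
    zero_add, add_zero] at hA hB hC
  rcases hA with ⟨hu, hv⟩ | ⟨hu, hv⟩ | ⟨hu, hv⟩ <;>
    rcases hB with ⟨ha', hc'⟩ | ⟨ha', hc'⟩ | ⟨ha', hc'⟩ <;>
    rcases hC with ⟨h1, h2⟩ | ⟨h1, h2⟩ | ⟨h1, h2⟩
  -- (P,P,*)
  · exact (detAB hdet (by omega) (by omega)).elim
  · exact (detAB hdet (by omega) (by omega)).elim
  · exact (detAB hdet (by omega) (by omega)).elim
  -- (P,Q,P) : A,C ↦ same
  · exact (detAux h hh x hdet (by linarith) (by linarith)).elim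
  -- (P,Q,Q) : B,C ↦ same
  · exact (detAux h hh (x-1) hdet (by linarith) (by linarith)).elim
  -- (P,Q,R) : GOOD, x ≡ m
  · have ha1 : a = 1 := by omega
    have key : x + b * (h:ℤ) = m := by linear_combination h1 - x * ha1 - hu
    have kz : ((x + b * (h:ℤ) : ℤ) : ZMod h) = ((m : ℤ) : ZMod h) := by rw [key]
    push_cast at kz
    rw [ZMod.natCast_self] at kz
    exact Or.inl (by linear_combination kz)
  -- (P,R,P) : A,C same
  · exact (detAux h hh x hdet (by linarith) (by linarith)).elim
  -- (P,R,Q) : GOOD, x ≡ m⁻¹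
  · have ham : a = m := by omega
    have key : m * x + b * (h:ℤ) = 1 := by linear_combination h1 - x * ham - hu
    have kz : ((m * x + b * (h:ℤ) : ℤ) : ZMod h) = ((1 : ℤ) : ZMod h) := by rw [key]
    push_cast at kz
    rw [ZMod.natCast_self] at kz
    exact Or.inr (Or.inl (zmod_eq_inv hmu (by linear_combination kz)))
  -- (P,R,R) : B,C same
  · exact (detAux h hh (x-1) hdet (by linarith) (by linarith)).elim
  -- (Q,P,P) : B,C same
  · exact (detAux h hh (x-1) hdet (by linarith) (by linarith)).elim
  -- (Q,P,Q) : A,C same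
  · exact (detAux h hh x hdet (by linarith) (by linarith)).elim
  -- (Q,P,R) : GOOD, x ≡ 1 - m
  · have ha1 : a = -1 := by omega
    have key : -x + b * (h:ℤ) + 1 = m := by linear_combination h1 - x * ha1 - hu
    have kz : ((-x + b * (h:ℤ) + 1 : ℤ) : ZMod h) = ((m : ℤ) : ZMod h) := by rw [key]
    push_cast at kz
    rw [ZMod.natCast_self] at kz
    exact Or.inr (Or.inr (Or.inl (by linear_combination -kz)))
  -- (Q,Q,*)
  · exact (detAB hdet (by omega) (by omega)).elim
  · exact (detAB hdet (by omega) (by omega)).elim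
  · exact (detAB hdet (by omega) (by omega)).elim
  -- (Q,R,P) : GOOD, x ≡ (1-m)⁻¹
  · have ham : a = m - 1 := by omega
    have key : (m - 1) * x + b * (h:ℤ) + 1 = 0 := by linear_combination h1 - x * ham - hu
    have kz : (((m - 1) * x + b * (h:ℤ) + 1 : ℤ) : ZMod h) = ((0 : ℤ) : ZMod h) := by rw [key]
    push_cast at kz
    rw [ZMod.natCast_self] at kz
    have hx : (1 - (m : ZMod h)) * (x : ZMod h) = 1 := by linear_combination -kz
    exact Or.inr (Or.inr (Or.inr (Or.inr (Or.inl (zmod_eq_inv h1mu hx)))))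
  -- (Q,R,Q) : A,C same
  · exact (detAux h hh x hdet (by linarith) (by linarith)).elim
  -- (Q,R,R) : B,C same
  · exact (detAux h hh (x-1) hdet (by linarith) (by linarith)).elim
  -- (R,P,P) : B,C same
  · exact (detAux h hh (x-1) hdet (by linarith) (by linarith)).elim
  -- (R,P,Q) : GOOD, x ≡ 1 - m⁻¹
  · have ham : a = -m := by omega
    have key : -(m * x) + b * (h:ℤ) + m = 1 := by linear_combination h1 - x * ham - hu
    have kz : ((-(m * x) + b * (h:ℤ) + m : ℤ) : ZMod h) = ((1 : ℤ) : ZMod h) := by rw [key]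
    push_cast at kz
    rw [ZMod.natCast_self] at kz
    refine Or.inr (Or.inr (Or.inr (Or.inl ?_)))
    linear_combination (-(m : ZMod h)⁻¹) * kz + (1 - (x : ZMod h)) * hinv
  -- (R,P,R) : A,C same
  · exact (detAux h hh x hdet (by linarith) (by linarith)).elim
  -- (R,Q,P) : GOOD, x ≡ (1 - m⁻¹)⁻¹
  · have ham : a = 1 - m := by omega
    have key : (1 - m) * x + b * (h:ℤ) + m = 0 := by linear_combination h1 - x * ham - hu
    have kz : (((1 - m) * x + b * (h:ℤ) + m : ℤ) : ZMod h) = ((0 : ℤ) : ZMod h) := by rw [key]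
    push_cast at kz
    rw [ZMod.natCast_self] at kz
    have hx : (1 - (m : ZMod h)⁻¹) * (x : ZMod h) = 1 := by
      linear_combination (-(m : ZMod h)⁻¹) * kz + (1 - (x : ZMod h)) * hinv
    have hwu : IsUnit (1 - (m : ZMod h)⁻¹) := by
      have hiu : IsUnit ((m : ZMod h)⁻¹) := IsUnit.of_mul_eq_one _ hinv
      have hrw : (1 - (m : ZMod h)⁻¹) = (m : ZMod h)⁻¹ * ((m : ZMod h) - 1) := by
        linear_combination -hinv
      rw [hrw]; exact hiu.mul hm1u
    exact Or.inr (Or.inr (Or.inr (Or.inr (Or.inr (zmod_eq_inv hwu hx)))))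
  -- (R,Q,Q) : B,C same
  · exact (detAux h hh (x-1) hdet (by linarith) (by linarith)).elim
  -- (R,Q,R) : A,C same
  · exact (detAux h hh x hdet (by linarith) (by linarith)).elim
  -- (R,R,*)
  · exact (detAB hdet (by omega) (by omega)).elim
  · exact (detAB hdet (by omega) (by omega)).elim
  · exact (detAB hdet (by omega) (by omega)).elim
end

section
/- Let n be an odd positive integer such that either 9 divides n, or n has a prime divisor p with p ≡ 5 (mod 6). Then there is no x ∈ ℤ/nℤ with x² − x + 1 = 0. -/
/-- If `n` is odd and either `9 ∣ n` or `n` has a prime divisor `p ≡ 5 (mod 6)`, then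
`x² - x + 1 = 0` has no solution modulo `n`. -/
theorem no_roots_quadratic (n : ℕ) (hn : 0 < n) (hodd : Odd n)
    (h : 9 ∣ n ∨ ∃ p ∈ n.primeFactors, p % 6 = 5) :
    ¬ ∃ x : ZMod n, x ^ 2 - x + 1 = 0 := by
  haveI : NeZero n := ⟨hn.ne'⟩
  rintro ⟨x, hx⟩
  rcases h with h9 | ⟨p, hp, hp5⟩
  · have : ∃ y : ZMod 9, y ^ 2 - y + 1 = 0 := by
      refine ⟨ZMod.castHom h9 (ZMod 9) x, ?_⟩
      have := congrArg (ZMod.castHom h9 (ZMod 9)) hx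
      simpa only [map_add, map_sub, map_pow, map_one, map_zero] using this
    obtain ⟨y, hy⟩ := this
    revert hy; revert y; decide
  · have hpp : p.Prime := Nat.prime_of_mem_primeFactors hp
    have hdvd : p ∣ n := Nat.dvd_of_mem_primeFactors hp
    haveI : Fact p.Prime := ⟨hpp⟩
    set y := ZMod.castHom hdvd (ZMod p) x with hydef
    have hy0 : y ^ 2 - y + 1 = 0 := by
      have := congrArg (ZMod.castHom hdvd (ZMod p)) hx
      simpa only [map_add, map_sub, map_pow, map_one, map_zero] using this
    have hy3 : y ^ 3 = -1 := by
      have h2 : y ^ 3 + 1 = 0 := by linear_combination (y + 1) * hy0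
      linear_combination h2
    have hyne : y ≠ 0 := by
      intro h0
      rw [h0] at hy0
      simp at hy0
    obtain ⟨k, hk⟩ : ∃ k, p - 1 = 6 * k + 4 := ⟨p / 6, by omega⟩
    have hfermat : y ^ (p - 1) = 1 := ZMod.pow_card_sub_one_eq_one hyne
    have hy6 : y ^ 6 = 1 := by
      have : y ^ 6 = (y ^ 3) ^ 2 := by ring
      rw [this, hy3]; ring
    have hy4 : y ^ 4 = 1 := by
      rw [hk, pow_add, pow_mul, hy6, one_pow, one_mul] at hfermat
      exact hfermat
    have hyeq : y = -1 := by
      have : y ^ 4 = -y := by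
        have : y ^ 4 = y ^ 3 * y := by ring
        rw [this, hy3]; ring
      rw [this] at hy4
      linear_combination -hy4
    have h3 : (3 : ZMod p) = 0 := by
      rw [hyeq] at hy0
      linear_combination hy0
    have : (p : ℕ) ∣ 3 := by
      have := (ZMod.natCast_eq_zero_iff 3 p).mp (by exact_mod_cast h3)
      exact this
    have := Nat.le_of_dvd (by norm_num) this
    omega
end

section
/- Let n be an odd positive integer such that either 9 divides n, or n has a prime divisor p with p ≡ 5 (mod 6). Then 𝒯(n), the number of unimodular equivalence classes of clean lattice triangles of area n/2, equals (imph(n) + 3)/6. -/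
/-- Twice the (signed) area of the lattice triangle with vertices `a, b, c`. -/
def triDet (a b c : ℤ × ℤ) : ℤ :=
  (b.1 - a.1) * (c.2 - a.2) - (b.2 - a.2) * (c.1 - a.1)

/-- The triangle with vertices `a, b, c` is clean: every edge vector has coprime
coordinates (and the vertices are affinely independent). -/
def IsCleanTri (a b c : ℤ × ℤ) : Prop :=
  triDet a b c ≠ 0 ∧
  Int.gcd (b.1 - a.1) (b.2 - a.2) = 1 ∧
  Int.gcd (c.1 - a.1) (c.2 - a.2) = 1 ∧
  Int.gcd (c.1 - b.1) (c.2 - b.2) = 1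

/-- The clean lattice triangles of area `n/2` (twice the area has absolute value `n`),
recorded by their ordered triple of vertices. -/
def CleanTri (n : ℕ) : Type :=
  {T : (ℤ × ℤ) × (ℤ × ℤ) × (ℤ × ℤ) //
    IsCleanTri T.1 T.2.1 T.2.2 ∧ (triDet T.1 T.2.1 T.2.2).natAbs = n}

/-- `TriCount n` (written `𝒯(n)` in the paper) is the number of clean lattice triangles
of area `n/2` up to unimodular equivalence. -/
noncomputable def TriCount (n : ℕ) : ℕ :=
  Nat.card (Quot (fun T₁ T₂ : CleanTri n =>
    UnimodEquiv {T₁.1.1, T₁.1.2.1, T₁.1.2.2} {T₂.1.1, T₂.1.2.1, T₂.1.2.2}))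


lemma unimod_refl (S : Set (ℤ × ℤ)) : UnimodEquiv S S := by
  refine ⟨1, 0, 0, 1, 0, 0, by norm_num, ?_⟩
  have : (fun p : ℤ × ℤ => ((1:ℤ) * p.1 + 0 * p.2 + 0, (0:ℤ) * p.1 + 1 * p.2 + 0)) = id := by
    funext p; simp
  rw [this, Set.image_id]

lemma unimod_symm {S₁ S₂ : Set (ℤ × ℤ)} (h : UnimodEquiv S₁ S₂) : UnimodEquiv S₂ S₁ := by
  obtain ⟨a, b, c, d, u, v, hdet, himg⟩ := h
  have hdet2 : (a*d - b*c) * (a*d - b*c) = 1 := by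
    rcases hdet with h|h <;> rw [h] <;> ring
  set e : ℤ := a*d - b*c with he
  refine ⟨e*d, -(e*b), -(e*c), e*a, -((e*d)*u + (-(e*b))*v), -((-(e*c))*u + (e*a)*v), ?_, ?_⟩
  · rcases hdet with h|h
    · left; linear_combination (e*e + e + 1) * h
    · right; linear_combination (e*e - e + 1) * h
  · rw [← himg, ← Set.image_comp]
    have : ((fun p : ℤ × ℤ => (e*d * p.1 + -(e*b) * p.2 + -((e*d)*u + (-(e*b))*v),
        -(e*c) * p.1 + e*a * p.2 + -((-(e*c))*u + (e*a)*v))) ∘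
        (fun p : ℤ × ℤ => (a * p.1 + b * p.2 + u, c * p.1 + d * p.2 + v))) = id := by
      funext p
      simp only [Function.comp_apply, id_eq]
      rw [Prod.ext_iff]
      constructor
      · show e*d * (a * p.1 + b * p.2 + u) + -(e*b) * (c * p.1 + d * p.2 + v) +
          -((e*d)*u + (-(e*b))*v) = p.1
        linear_combination p.1 * hdet2
      · show -(e*c) * (a * p.1 + b * p.2 + u) + e*a * (c * p.1 + d * p.2 + v) +
          -((-(e*c))*u + (e*a)*v) = p.2
        linear_combination p.2 * hdet2
    rw [this, Set.image_id]

lemma unimod_trans {S₁ S₂ S₃ : Set (ℤ × ℤ)} (h : UnimodEquiv S₁ S₂) (h' : UnimodEquiv S₂ S₃) :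
    UnimodEquiv S₁ S₃ := by
  obtain ⟨a, b, c, d, u, v, hdet, himg⟩ := h
  obtain ⟨a', b', c', d', u', v', hdet', himg'⟩ := h'
  refine ⟨a'*a + b'*c, a'*b + b'*d, c'*a + d'*c, c'*b + d'*d,
    a'*u + b'*v + u', c'*u + d'*v + v', ?_, ?_⟩
  · rcases hdet with h|h <;> rcases hdet' with h'|h'
    · left; linear_combination (a*d - b*c) * h' + h
    · right; linear_combination (a*d - b*c) * h' - h
    · right; linear_combination (a*d - b*c) * h' + h
    · left; linear_combination (a*d - b*c) * h' - h
  · rw [← himg', ← himg, ← Set.image_comp]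
    have hfun : (fun p : ℤ × ℤ => ((a'*a + b'*c) * p.1 + (a'*b + b'*d) * p.2 + (a'*u + b'*v + u'),
        (c'*a + d'*c) * p.1 + (c'*b + d'*d) * p.2 + (c'*u + d'*v + v'))) =
        ((fun p : ℤ × ℤ => (a' * p.1 + b' * p.2 + u', c' * p.1 + d' * p.2 + v')) ∘
         (fun p : ℤ × ℤ => (a * p.1 + b * p.2 + u, c * p.1 + d * p.2 + v))) := by
      funext p
      simp only [Function.comp_apply]
      rw [Prod.ext_iff]
      exact ⟨by dsimp; ring, by dsimp; ring⟩
    rw [hfun]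


lemma normal_sep (n : ℕ) (hn : 0 < n) (X Y : ℤ)
    (h : UnimodEquiv {((0:ℤ),(0:ℤ)), ((1:ℤ),(0:ℤ)), (X,(n:ℤ))}
      {((0:ℤ),(0:ℤ)), ((1:ℤ),(0:ℤ)), (Y,(n:ℤ))}) :
    ((Y:ZMod n) = X ∨ (Y:ZMod n) = 1 - X ∨ (X:ZMod n)*Y = 1 ∨ (X:ZMod n)*(1-Y) = 1 ∨
      (1-(X:ZMod n))*Y = 1 ∨ (1-(X:ZMod n))*(1-Y) = 1) := by
  obtain ⟨a,b,c,d,u,v,hdet,himg⟩ := h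
  have mem0 : ((a*0+b*0+u, c*0+d*0+v) : ℤ×ℤ) ∈ ({((0:ℤ),(0:ℤ)), ((1:ℤ),(0:ℤ)), (Y,(n:ℤ))} : Set (ℤ×ℤ)) := by
    rw [← himg]; exact Set.mem_image_of_mem _ (Set.mem_insert _ _)
  have mem1 : ((a*1+b*0+u, c*1+d*0+v) : ℤ×ℤ) ∈ ({((0:ℤ),(0:ℤ)), ((1:ℤ),(0:ℤ)), (Y,(n:ℤ))} : Set (ℤ×ℤ)) := by
    rw [← himg]; exact Set.mem_image_of_mem _ (Set.mem_insert_of_mem _ (Set.mem_insert _ _))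
  have mem2 : ((a*X+b*n+u, c*X+d*n+v) : ℤ×ℤ) ∈ ({((0:ℤ),(0:ℤ)), ((1:ℤ),(0:ℤ)), (Y,(n:ℤ))} : Set (ℤ×ℤ)) := by
    rw [← himg]
    exact Set.mem_image_of_mem _ (Set.mem_insert_of_mem _ (Set.mem_insert_of_mem _ (Set.mem_singleton _)))
  simp only [Set.mem_insert_iff, Set.mem_singleton_iff, Prod.mk.injEq, mul_zero, mul_one,
    add_zero, zero_add] at mem0 mem1 mem2
  have hne : (n:ℤ) ≠ 0 := by exact_mod_cast hn.ne'
  have bad01 : ∀ s t : ℤ, u = s → v = t → a + u = s → c + v = t → False := by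
    intro s t f1 f2 f3 f4
    have ha : a = 0 := by linarith
    have hc : c = 0 := by linarith
    rcases hdet with hd|hd <;> rw [ha, hc] at hd <;> simp at hd
  have bad02 : ∀ s t : ℤ, u = s → v = t → a*X + b*n + u = s → c*X + d*n + v = t → False := by
    intro s t f1 f2 f3 f4
    have h3 : (a*d - b*c) * (n:ℤ) = 0 := by linear_combination a*f4 - a*f2 - c*f3 + c*f1
    rcases hdet with hd|hd <;> rw [hd] at h3 <;> [exact hne (by linarith); exact hne (by linarith)]
  have bad12 : ∀ s t : ℤ, a + u = s → c + v = t → a*X + b*n + u = s → c*X + d*n + v = t → False := by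
    intro s t f1 f2 f3 f4
    have h3 : (a*d - b*c) * (n:ℤ) = 0 := by linear_combination a*f4 - a*f2 - c*f3 + c*f1
    rcases hdet with hd|hd <;> rw [hd] at h3 <;> [exact hne (by linarith); exact hne (by linarith)]
  have ic : ∀ z w : ℤ, z = w → ((z:ZMod n) = (w:ZMod n)) := fun _ _ hzw => by rw [hzw]
  have hn0 : ((n:ℕ):ZMod n) = 0 := ZMod.natCast_self n
  rcases mem0 with h0|h0|h0 <;> rcases mem1 with h1|h1|h1 <;> rcases mem2 with h2|h2|h2
  -- (0,0,·)
  · exact ( bad01 _ _ h0.1 h0.2 h1.1 h1.2).elim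
  · exact ( bad01 _ _ h0.1 h0.2 h1.1 h1.2).elim
  · exact ( bad01 _ _ h0.1 h0.2 h1.1 h1.2).elim
  -- (0,1,0)
  · exact ( bad02 _ _ h0.1 h0.2 h2.1 h2.2).elim
  -- (0,1,1)
  · exact ( bad12 _ _ h1.1 h1.2 h2.1 h2.2).elim
  -- (0,1,2) : identity, Y = X
  · have e1 := ic _ _ h0.1; have e2 := ic _ _ h1.1; have e3 := ic _ _ h2.1
    push_cast at e1 e2 e3
    exact Or.inl (by linear_combination (-1 : ZMod n)*e3 + (X:ZMod n)*e2 + (1-(X:ZMod n))*e1 + (b:ZMod n)*hn0)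
  -- (0,2,0)
  · exact ( bad02 _ _ h0.1 h0.2 h2.1 h2.2).elim
  -- (0,2,1) : X*Y = 1
  · have e1 := ic _ _ h0.1; have e2 := ic _ _ h1.1; have e3 := ic _ _ h2.1
    push_cast at e1 e2 e3
    refine Or.inr (Or.inr (Or.inl ?_))
    linear_combination e3 - (X:ZMod n)*e2 - (1-(X:ZMod n))*e1 - (b:ZMod n)*hn0
  -- (0,2,2)
  · exact ( bad12 _ _ h1.1 h1.2 h2.1 h2.2).elim
  -- (1,0,0)
  · exact (bad12 _ _ h1.1 h1.2 h2.1 h2.2).elim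
  -- (1,0,1)
  · exact (bad02 _ _ h0.1 h0.2 h2.1 h2.2).elim
  -- (1,0,2) : Y = 1 - X
  · have e1 := ic _ _ h0.1; have e2 := ic _ _ h1.1; have e3 := ic _ _ h2.1
    push_cast at e1 e2 e3
    refine Or.inr (Or.inl ?_)
    linear_combination (-1 : ZMod n)*e3 + (X:ZMod n)*e2 + (1-(X:ZMod n))*e1 + (b:ZMod n)*hn0
  -- (1,1,·)
  · exact ( bad01 _ _ h0.1 h0.2 h1.1 h1.2).elim
  · exact ( bad01 _ _ h0.1 h0.2 h1.1 h1.2).elim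
  · exact ( bad01 _ _ h0.1 h0.2 h1.1 h1.2).elim
  -- (1,2,0) : X*(1-Y) = 1
  · have e1 := ic _ _ h0.1; have e2 := ic _ _ h1.1; have e3 := ic _ _ h2.1
    push_cast at e1 e2 e3
    refine Or.inr (Or.inr (Or.inr (Or.inl ?_)))
    linear_combination (-1 : ZMod n)*e3 + (X:ZMod n)*e2 + (1-(X:ZMod n))*e1 + (b:ZMod n)*hn0
  -- (1,2,1)
  · exact (bad02 _ _ h0.1 h0.2 h2.1 h2.2).elim
  -- (1,2,2)
  · exact (bad12 _ _ h1.1 h1.2 h2.1 h2.2).elim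
  -- (2,0,0)
  · exact (bad12 _ _ h1.1 h1.2 h2.1 h2.2).elim
  -- (2,0,1) : (1-X)*Y = 1
  · have e1 := ic _ _ h0.1; have e2 := ic _ _ h1.1; have e3 := ic _ _ h2.1
    push_cast at e1 e2 e3
    refine Or.inr (Or.inr (Or.inr (Or.inr (Or.inl ?_))))
    linear_combination e3 - (X:ZMod n)*e2 - (1-(X:ZMod n))*e1 - (b:ZMod n)*hn0
  -- (2,0,2)
  · exact (bad02 _ _ h0.1 h0.2 h2.1 h2.2).elim
  -- (2,1,0) : (1-X)*(1-Y) = 1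
  · have e1 := ic _ _ h0.1; have e2 := ic _ _ h1.1; have e3 := ic _ _ h2.1
    push_cast at e1 e2 e3
    refine Or.inr (Or.inr (Or.inr (Or.inr (Or.inr ?_))))
    linear_combination (-1 : ZMod n)*e3 + (X:ZMod n)*e2 + (1-(X:ZMod n))*e1 + (b:ZMod n)*hn0
  -- (2,1,1)
  · exact ( bad12 _ _ h1.1 h1.2 h2.1 h2.2).elim
  -- (2,1,2)
  · exact ( bad02 _ _ h0.1 h0.2 h2.1 h2.2).elim
  -- (2,2,·)
  · exact ( bad01 _ _ h0.1 h0.2 h1.1 h1.2).elim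
  · exact ( bad01 _ _ h0.1 h0.2 h1.1 h1.2).elim
  · exact ( bad01 _ _ h0.1 h0.2 h1.1 h1.2).elim

lemma gen_s (n : ℕ) (X Y : ℤ) (h : (n:ℤ) ∣ (X + Y - 1)) :
    UnimodEquiv {((0:ℤ),(0:ℤ)), ((1:ℤ),(0:ℤ)), (X,(n:ℤ))}
      {((0:ℤ),(0:ℤ)), ((1:ℤ),(0:ℤ)), (Y,(n:ℤ))} := by
  obtain ⟨m, hm⟩ := h
  refine ⟨-1, m, 0, 1, 1, 0, by norm_num, ?_⟩
  rw [Set.image_insert_eq, Set.image_insert_eq, Set.image_singleton]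
  have p0 : ((-1:ℤ) * 0 + m * 0 + 1, (0:ℤ) * 0 + 1 * 0 + 0) = ((1:ℤ), (0:ℤ)) := by norm_num
  have p1 : ((-1:ℤ) * 1 + m * 0 + 1, (0:ℤ) * 1 + 1 * 0 + 0) = ((0:ℤ), (0:ℤ)) := by norm_num
  have p2 : ((-1:ℤ) * X + m * n + 1, (0:ℤ) * X + 1 * n + 0) = (Y, (n:ℤ)) := by
    rw [Prod.mk.injEq]; constructor <;> [linarith [hm]; ring]
  rw [p0, p1, p2, Set.insert_comm]

lemma gen_i (n : ℕ) (X Y : ℤ) (h : (n:ℤ) ∣ (X*Y - 1)) :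
    UnimodEquiv {((0:ℤ),(0:ℤ)), ((1:ℤ),(0:ℤ)), (X,(n:ℤ))}
      {((0:ℤ),(0:ℤ)), ((1:ℤ),(0:ℤ)), (Y,(n:ℤ))} := by
  obtain ⟨m, hm⟩ := h
  refine ⟨Y, -m, n, -X, 0, 0, Or.inr (by linear_combination -hm), ?_⟩
  rw [Set.image_insert_eq, Set.image_insert_eq, Set.image_singleton]
  have p0 : ((Y:ℤ) * 0 + -m * 0 + 0, (n:ℤ) * 0 + -X * 0 + 0) = ((0:ℤ), (0:ℤ)) := by norm_num
  have p1 : ((Y:ℤ) * 1 + -m * 0 + 0, (n:ℤ) * 1 + -X * 0 + 0) = (Y, (n:ℤ)) := by norm_num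
  have p2 : ((Y:ℤ) * X + -m * n + 0, (n:ℤ) * X + -X * n + 0) = ((1:ℤ), (0:ℤ)) := by
    rw [Prod.mk.injEq]; constructor <;> [linarith [hm]; ring]
  rw [p0, p1, p2]
  ext p
  simp only [Set.mem_insert_iff, Set.mem_singleton_iff]
  tauto


variable {n : ℕ}

def POK (x : ZMod n) : Prop := IsUnit x ∧ IsUnit (x - 1)

noncomputable def orbitSet (x : ZMod n) : Finset (ZMod n) :=
  {x, 1-x, x⁻¹, 1-x⁻¹, (1-x)⁻¹, 1-(1-x)⁻¹}

lemma mem_orbitSet_self (x : ZMod n) : x ∈ orbitSet x := by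
  simp [orbitSet]

lemma pok_sub (x : ZMod n) (hx : POK x) : POK (1 - x) := by
  obtain ⟨h1, h2⟩ := hx
  constructor
  · have : (1:ZMod n) - x = -(x - 1) := by ring
    rw [this]; exact h2.neg
  · have : (1:ZMod n) - x - 1 = -x := by ring
    rw [this]; exact h1.neg

lemma pok_inv (x : ZMod n) (hx : POK x) : POK x⁻¹ := by
  obtain ⟨h1, h2⟩ := hx
  have hu : x * x⁻¹ = 1 := ZMod.mul_inv_of_unit x h1
  have hv : (x - 1) * (x - 1)⁻¹ = 1 := ZMod.mul_inv_of_unit _ h2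
  constructor
  · exact IsUnit.of_mul_eq_one x (by linear_combination hu)
  · exact IsUnit.of_mul_eq_one (-x * (x-1)⁻¹) (by linear_combination hv - (x-1)⁻¹ * hu)

lemma s_orbit (x : ZMod n) : orbitSet (1 - x) = orbitSet x := by
  unfold orbitSet
  rw [sub_sub_cancel]
  ext a
  simp only [Finset.mem_insert, Finset.mem_singleton]
  tauto

lemma inv_one_sub_inv (x : ZMod n) (hx : POK x) : (1 - x⁻¹)⁻¹ = 1 - (1 - x)⁻¹ := by
  have h1x : IsUnit (1 - x) := (pok_sub x hx).1
  have hu : x * x⁻¹ = 1 := ZMod.mul_inv_of_unit x hx.1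
  have hv : (1 - x) * (1 - x)⁻¹ = 1 := ZMod.mul_inv_of_unit _ h1x
  apply ZMod.inv_eq_of_mul_eq_one
  linear_combination x⁻¹ * hv + (1-x)⁻¹ * hu

lemma inv_inv' (x : ZMod n) (hx : IsUnit x) : x⁻¹⁻¹ = x :=
  ZMod.inv_eq_of_mul_eq_one _ _ _ (by linear_combination ZMod.mul_inv_of_unit x hx)

lemma i_orbit (x : ZMod n) (hx : POK x) : orbitSet x⁻¹ = orbitSet x := by
  unfold orbitSet
  rw [inv_inv' x hx.1, inv_one_sub_inv x hx, sub_sub_cancel]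
  ext a
  simp only [Finset.mem_insert, Finset.mem_singleton]
  tauto

lemma orbit_pok (x y : ZMod n) (hx : POK x) (hy : y ∈ orbitSet x) : POK y := by
  simp only [orbitSet, Finset.mem_insert, Finset.mem_singleton] at hy
  have h1 := pok_sub x hx
  have h2 := pok_inv x hx
  have h3 := pok_inv _ h1
  rcases hy with rfl|rfl|rfl|rfl|rfl|rfl
  · exact hx
  · exact h1
  · exact h2
  · exact pok_sub _ h2
  · exact h3
  · exact pok_sub _ h3

lemma orbit_inv (x y : ZMod n) (hx : POK x) (hy : y ∈ orbitSet x) : orbitSet y = orbitSet x := by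
  simp only [orbitSet, Finset.mem_insert, Finset.mem_singleton] at hy
  have h1 := pok_sub x hx
  have h2 := pok_inv x hx
  rcases hy with rfl|rfl|rfl|rfl|rfl|rfl
  · rfl
  · exact s_orbit x
  · exact i_orbit x hx
  · rw [s_orbit, i_orbit x hx]
  · rw [i_orbit _ h1, s_orbit]
  · rw [s_orbit, i_orbit _ h1, s_orbit]

noncomputable def okSet (n : ℕ) [NeZero n] : Finset (ZMod n) :=
  @Finset.filter _ (fun x => POK x) (Classical.decPred _) Finset.univ

lemma mem_okSet {n : ℕ} [NeZero n] {x : ZMod n} : x ∈ okSet n ↔ POK x := by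
  unfold okSet
  rw [@Finset.mem_filter _ _ (Classical.decPred _)]
  simp

lemma pok_two (n : ℕ) (h2u : IsUnit (2:ZMod n)) : POK (2 : ZMod n) := by
  refine ⟨h2u, ?_⟩
  rw [show (2:ZMod n) - 1 = 1 by ring]
  exact isUnit_one

lemma orbit_two (n : ℕ) (h2u : IsUnit (2:ZMod n)) : orbitSet (2:ZMod n) = {2, -1, (2:ZMod n)⁻¹} := by
  have h2 : (2:ZMod n) * 2⁻¹ = 1 := ZMod.mul_inv_of_unit _ h2u
  have e1 : (1:ZMod n) - 2⁻¹ = 2⁻¹ :=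
    (ZMod.inv_eq_of_mul_eq_one n 2 (1 - 2⁻¹) (by linear_combination -h2)).symm
  have e2 : ((1:ZMod n) - 2)⁻¹ = -1 := by
    rw [show (1:ZMod n) - 2 = -1 by ring]
    exact ZMod.inv_eq_of_mul_eq_one n (-1) (-1) (by ring)
  unfold orbitSet
  rw [e2, e1, show (1:ZMod n) - 2 = -1 by ring, show (1:ZMod n) - -1 = 2 by ring]
  ext a
  simp only [Finset.mem_insert, Finset.mem_singleton]
  tauto

lemma card_orbit_two (n : ℕ) (h3 : (3:ZMod n) ≠ 0) (h2u : IsUnit (2:ZMod n)) : (orbitSet (2:ZMod n)).card = 3 := by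
  have h2 : (2:ZMod n) * 2⁻¹ = 1 := ZMod.mul_inv_of_unit _ h2u
  have ne1 : (2:ZMod n) ≠ -1 := fun h => h3 (by linear_combination h)
  have ne2 : (2:ZMod n) ≠ 2⁻¹ := fun h => h3 (by linear_combination 2*h + h2)
  have ne3 : (-1:ZMod n) ≠ 2⁻¹ := fun h => h3 (by linear_combination -2*h - h2)
  rw [orbit_two n h2u]
  rw [Finset.card_insert_of_notMem (by
      simp only [Finset.mem_insert, Finset.mem_singleton]; push_neg; exact ⟨ne1, ne2⟩),
    Finset.card_insert_of_notMem (by simp only [Finset.mem_singleton]; exact ne3),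
    Finset.card_singleton]

lemma orbit_special (n : ℕ) (h2u : IsUnit (2:ZMod n)) {x : ZMod n} (hx : POK x) (h : x = 2 ∨ x = -1 ∨ 2*x = 1) :
    orbitSet x = orbitSet (2:ZMod n) := by
  rcases h with rfl|rfl|h
  · rfl
  · refine orbit_inv 2 (-1) (pok_two n h2u) ?_
    unfold orbitSet
    simp only [Finset.mem_insert, Finset.mem_singleton]
    right; left; ring
  · have : (2:ZMod n)⁻¹ = x := ZMod.inv_eq_of_mul_eq_one n 2 x h
    refine orbit_inv 2 x (pok_two n h2u) ?_
    rw [← this]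
    unfold orbitSet
    simp only [Finset.mem_insert, Finset.mem_singleton]
    tauto

lemma card_orbit_six (n : ℕ) (hroot : ∀ z : ZMod n, z*z - z + 1 ≠ 0) (h2u : IsUnit (2:ZMod n)) {x : ZMod n} (hx : POK x) (hns : orbitSet x ≠ orbitSet (2:ZMod n)) :
    (orbitSet x).card = 6 := by
  have hx2 : x ≠ 2 := fun h => hns (orbit_special n h2u hx (Or.inl h))
  have hxm1 : x ≠ -1 := fun h => hns (orbit_special n h2u hx (Or.inr (Or.inl h)))
  have hx12 : 2*x ≠ 1 := fun h => hns (orbit_special n h2u hx (Or.inr (Or.inr h)))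
  have hxu := hx.1
  have hx1 := hx.2
  have h1xu : IsUnit (1 - x) := (pok_sub x hx).1
  have hu : x * x⁻¹ = 1 := ZMod.mul_inv_of_unit x hxu
  have hv : (1-x) * (1-x)⁻¹ = 1 := ZMod.mul_inv_of_unit _ h1xu
  have hvu : IsUnit ((1-x)⁻¹) := IsUnit.of_mul_eq_one (1-x) (by linear_combination hv)
  have n01 : x ≠ 1 - x := fun h => hx12 (by linear_combination h)
  have n02 : x ≠ x⁻¹ := fun h => by
    have hz : (x - 1) * (x + 1) = 0 := by linear_combination x*h + hu
    exact hxm1 (by linear_combination hx1.mul_right_eq_zero.mp hz)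
  have n03 : x ≠ 1 - x⁻¹ := fun h => hroot x (by linear_combination x*h - hu)
  have n04 : x ≠ (1-x)⁻¹ := fun h => hroot x (by linear_combination (x-1)*h - hv)
  have n05 : x ≠ 1 - (1-x)⁻¹ := fun h => by
    have hz : x * (x - 2) = 0 := by linear_combination (x-1)*h + hv
    exact hx2 (by linear_combination hxu.mul_right_eq_zero.mp hz)
  have n12 : 1 - x ≠ x⁻¹ := fun h => hroot x (by linear_combination -x*h - hu)
  have n13 : (1:ZMod n) - x ≠ 1 - x⁻¹ := fun h => by
    have hz : (x - 1) * (x + 1) = 0 := by linear_combination -x*h + hu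
    exact hxm1 (by linear_combination hx1.mul_right_eq_zero.mp hz)
  have n14 : (1:ZMod n) - x ≠ (1-x)⁻¹ := fun h => by
    have hz : x * (x - 2) = 0 := by linear_combination (1-x)*h + hv
    exact hx2 (by linear_combination hxu.mul_right_eq_zero.mp hz)
  have n15 : (1:ZMod n) - x ≠ 1 - (1-x)⁻¹ := fun h => hroot x (by linear_combination -(x-1)*h - hv)
  have n23 : (x⁻¹ : ZMod n) ≠ 1 - x⁻¹ := fun h => hx2 (by linear_combination -x*h + 2*hu)
  have n24 : (x⁻¹ : ZMod n) ≠ (1-x)⁻¹ := fun h => by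
    have hz : (2*x - 1) * (1-x)⁻¹ = 0 := by linear_combination hu - hv - x*h
    exact hx12 (by linear_combination hvu.mul_left_eq_zero.mp hz)
  have n25 : (x⁻¹ : ZMod n) ≠ 1 - (1-x)⁻¹ := fun h =>
    hroot x (by linear_combination (x - x*x)*h - (1-x)*hu - x*hv)
  have n34 : (1:ZMod n) - x⁻¹ ≠ (1-x)⁻¹ := fun h =>
    hroot x (by linear_combination (x*x - x)*h - (1-x)*hu - x*hv)
  have n35 : (1:ZMod n) - x⁻¹ ≠ 1 - (1-x)⁻¹ := fun h => by
    have hz : (2*x - 1) * (1-x)⁻¹ = 0 := by linear_combination hu - hv + x*h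
    exact hx12 (by linear_combination hvu.mul_left_eq_zero.mp hz)
  have n45 : ((1-x)⁻¹ : ZMod n) ≠ 1 - (1-x)⁻¹ := fun h => hxm1 (by linear_combination (1-x)*h - 2*hv)
  unfold orbitSet
  rw [Finset.card_insert_of_notMem (by
      simp only [Finset.mem_insert, Finset.mem_singleton]; push_neg
      exact ⟨n01, n02, n03, n04, n05⟩),
    Finset.card_insert_of_notMem (by
      simp only [Finset.mem_insert, Finset.mem_singleton]; push_neg
      exact ⟨n12, n13, n14, n15⟩),
    Finset.card_insert_of_notMem (by
      simp only [Finset.mem_insert, Finset.mem_singleton]; push_neg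
      exact ⟨n23, n24, n25⟩),
    Finset.card_insert_of_notMem (by
      simp only [Finset.mem_insert, Finset.mem_singleton]; push_neg
      exact ⟨n34, n35⟩),
    Finset.card_insert_of_notMem (by simp only [Finset.mem_singleton]; exact n45),
    Finset.card_singleton]

lemma count_orbits (n : ℕ) [NeZero n] (hroot : ∀ z : ZMod n, z*z - z + 1 ≠ 0) (h3 : (3:ZMod n) ≠ 0) (h2u : IsUnit (2:ZMod n)) : (okSet n).card + 3 = 6 * ((okSet n).image orbitSet).card := by
  classical
  set O := (okSet n).image orbitSet with hO
  have hmem : ∀ x ∈ okSet n, orbitSet x ∈ O := fun x hx => Finset.mem_image_of_mem _ hx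
  have hcard := Finset.card_eq_sum_card_fiberwise hmem
  have hfiber : ∀ x ∈ okSet n, (okSet n).filter (fun y => orbitSet y = orbitSet x) = orbitSet x := by
    intro x hx
    have hxP : POK x := mem_okSet.mp hx
    ext y
    rw [Finset.mem_filter, mem_okSet]
    constructor
    · rintro ⟨hy1, hy2⟩
      rw [← hy2]; exact mem_orbitSet_self y
    · intro hy
      exact ⟨orbit_pok x y hxP hy, orbit_inv x y hxP hy⟩
  have htwo : (2:ZMod n) ∈ okSet n := mem_okSet.mpr (pok_two n h2u)
  have hosmem : orbitSet (2:ZMod n) ∈ O := hmem _ htwo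
  have hval : ∀ o ∈ O, ((okSet n).filter (fun y => orbitSet y = o)).card
      = if o = orbitSet (2:ZMod n) then 3 else 6 := by
    intro o ho
    obtain ⟨x, hxS, rfl⟩ := Finset.mem_image.mp ho
    rw [hfiber x hxS]
    by_cases hsp : orbitSet x = orbitSet (2:ZMod n)
    · rw [if_pos hsp, hsp, card_orbit_two n h3 h2u]
    · rw [if_neg hsp, card_orbit_six n hroot h2u (mem_okSet.mp hxS) hsp]
  rw [Finset.sum_congr rfl hval] at hcard
  rw [← Finset.add_sum_erase O _ hosmem, if_pos rfl] at hcard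
  have herase : ∑ o ∈ O.erase (orbitSet (2:ZMod n)),
      (if o = orbitSet (2:ZMod n) then 3 else 6) = 6 * (O.erase (orbitSet (2:ZMod n))).card := by
    rw [Finset.sum_congr rfl (fun o ho => if_neg (Finset.ne_of_mem_erase ho))]
    rw [Finset.sum_const, smul_eq_mul, mul_comm]
  rw [herase, Finset.card_erase_of_mem hosmem] at hcard
  have hOpos : 0 < O.card := Finset.card_pos.mpr ⟨_, hosmem⟩
  omega


lemma hyp_n_gt (n : ℕ) (hn : 0 < n)
    (h : 9 ∣ n ∨ ∃ p ∈ n.primeFactors, p % 6 = 5) : 1 < n := by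
  rcases h with h9 | ⟨p, hp, hp5⟩
  · have := Nat.le_of_dvd hn h9; omega
  · have hpd := Nat.dvd_of_mem_primeFactors hp
    have := Nat.le_of_dvd hn hpd
    omega

lemma hyp_two_unit (n : ℕ) (hodd : Odd n) : IsUnit (2 : ZMod n) := by
  have hcop : Nat.Coprime 2 n := Nat.coprime_two_left.mpr hodd
  have := (ZMod.isUnit_iff_coprime 2 n).mpr hcop
  simpa using this

lemma hyp_three_ne (n : ℕ) (hn : 0 < n)
    (h : 9 ∣ n ∨ ∃ p ∈ n.primeFactors, p % 6 = 5) : (3 : ZMod n) ≠ 0 := by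
  intro h3
  have h3' : ((3:ℕ) : ZMod n) = 0 := by exact_mod_cast h3
  have hdvd : n ∣ 3 := (ZMod.natCast_eq_zero_iff 3 n).mp h3'
  have hn3 : n ≤ 3 := Nat.le_of_dvd (by norm_num) hdvd
  rcases h with h9 | ⟨p, hp, hp5⟩
  · have := Nat.le_of_dvd hn h9; omega
  · have hpp := Nat.prime_of_mem_primeFactors hp
    have hpd := (Nat.dvd_of_mem_primeFactors hp).trans hdvd
    have := Nat.le_of_dvd (by norm_num) hpd
    have := hpp.two_le
    omega

lemma hyp_root_free (n : ℕ) (hn : 0 < n)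
    (h : 9 ∣ n ∨ ∃ p ∈ n.primeFactors, p % 6 = 5) :
    ∀ z : ZMod n, z*z - z + 1 ≠ 0 := by
  intro z hz
  rcases h with h9 | ⟨p, hp, hp5⟩
  · let f := ZMod.castHom h9 (ZMod 9)
    have hw : (f z)*(f z) - f z + 1 = 0 := by
      have := congrArg f hz
      simpa using this
    have : ∀ w : ZMod 9, w*w - w + 1 ≠ 0 := by decide
    exact this (f z) hw
  · have hpp := Nat.prime_of_mem_primeFactors hp
    haveI : Fact (Nat.Prime p) := ⟨hpp⟩
    let f := ZMod.castHom (Nat.dvd_of_mem_primeFactors hp) (ZMod p)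
    set w := f z with hwdef
    have hw : w*w - w + 1 = 0 := by
      have := congrArg f hz
      simpa using this
    have hple := hpp.two_le
    have h2ne0 : (2 : ZMod p) ≠ 0 := by
      intro hc
      have : ((2:ℕ) : ZMod p) = 0 := by exact_mod_cast hc
      have := Nat.le_of_dvd (by norm_num) ((ZMod.natCast_eq_zero_iff 2 p).mp this)
      omega
    have h3ne0 : (3 : ZMod p) ≠ 0 := by
      intro hc
      have : ((3:ℕ) : ZMod p) = 0 := by exact_mod_cast hc
      have := Nat.le_of_dvd (by norm_num) ((ZMod.natCast_eq_zero_iff 3 p).mp this)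
      omega
    have hw0 : w ≠ 0 := by
      intro hc
      rw [hc] at hw
      norm_num at hw
    have hcube : w^3 = -1 := by linear_combination (w+1)*hw
    have h6 : w^6 = 1 := by
      rw [show (6:ℕ) = 3*2 from rfl, pow_mul, hcube]; ring
    have hne3 : w^3 ≠ 1 := by
      rw [hcube]; intro hc; exact h2ne0 (by linear_combination -hc)
    have hne2 : w^2 ≠ 1 := by
      intro hc
      have hwv : w = 2 := by linear_combination hc - hw
      rw [hwv] at hw
      norm_num at hw
      exact h3ne0 (by linear_combination hw)
    have hd6 : orderOf w ∣ 6 := orderOf_dvd_of_pow_eq_one h6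
    have hdp : orderOf w ∣ p - 1 := orderOf_dvd_of_pow_eq_one (ZMod.pow_card_sub_one_eq_one hw0)
    have hnd3 : ¬ orderOf w ∣ 3 := fun hdd => hne3 (orderOf_dvd_iff_pow_eq_one.mp hdd)
    have hnd2 : ¬ orderOf w ∣ 2 := fun hdd => hne2 (orderOf_dvd_iff_pow_eq_one.mp hdd)
    have hle : orderOf w ≤ 6 := Nat.le_of_dvd (by norm_num) hd6
    have hd : orderOf w = 6 := by
      interval_cases (orderOf w) <;> omega
    rw [hd] at hdp
    omega

lemma imph_eq_card_s15 (n : ℕ) (hn1 : 1 < n) :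
    haveI : NeZero n := ⟨by omega⟩
    imph n = (okSet n).card := by
  haveI : NeZero n := ⟨by omega⟩
  haveI : Fact (1 < n) := ⟨hn1⟩
  unfold imph
  apply Finset.card_bij (fun (a : ℕ) _ => (a : ZMod n))
  · intro a ha
    rw [Finset.mem_filter, Finset.mem_Icc] at ha
    obtain ⟨⟨ha1, han⟩, hg1, hg2⟩ := ha
    rw [mem_okSet]
    constructor
    · exact (ZMod.isUnit_iff_coprime a n).mpr hg2
    · have hc : ((a:ZMod n)) - 1 = (((a-1 : ℕ)):ZMod n) := by
        push_cast [ha1]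
        ring
      rw [hc]
      exact (ZMod.isUnit_iff_coprime (a-1) n).mpr hg1
  · intro a ha b hb hab
    rw [Finset.mem_filter, Finset.mem_Icc] at ha hb
    by_cases han : a = n <;> by_cases hbn : b = n
    · omega
    · have hv : (b : ZMod n).val = b := ZMod.val_cast_of_lt (by omega)
      rw [← hab, han, ZMod.natCast_self] at hv
      simp [ZMod.val_zero] at hv
      omega
    · have hv : (a : ZMod n).val = a := ZMod.val_cast_of_lt (by omega)
      rw [hab, hbn, ZMod.natCast_self] at hv
      simp [ZMod.val_zero] at hv
      omega
    · have hva : (a : ZMod n).val = a := ZMod.val_cast_of_lt (by omega)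
      have hvb : (b : ZMod n).val = b := ZMod.val_cast_of_lt (by omega)
      rw [← hva, ← hvb, hab]
  · intro x hx
    rw [mem_okSet] at hx
    have hx0 : x ≠ 0 := by
      intro hc
      rw [hc] at hx
      exact one_ne_zero (isUnit_zero_iff.mp hx.1).symm
    have hval0 : x.val ≠ 0 := fun hc => hx0 ((ZMod.val_eq_zero x).mp hc)
    have hvlt : x.val < n := ZMod.val_lt x
    have hcast : ((x.val : ℕ) : ZMod n) = x := ZMod.natCast_rightInverse x
    refine ⟨x.val, ?_, hcast⟩
    rw [Finset.mem_filter, Finset.mem_Icc]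
    refine ⟨⟨by omega, by omega⟩, ?_, ?_⟩
    · have hc : (((x.val - 1 : ℕ)):ZMod n) = x - 1 := by
        push_cast [Nat.one_le_iff_ne_zero.mpr hval0]
        rw [hcast]
      exact (ZMod.isUnit_iff_coprime (x.val - 1) n).mp (by rw [hc]; exact hx.2)
    · exact (ZMod.isUnit_iff_coprime x.val n).mp (by rw [hcast]; exact hx.1)


lemma gcd_unimod_s15 (a b c d v w : ℤ) (hdet : a*d - b*c = 1 ∨ a*d - b*c = -1) :
    Int.gcd (a*v + b*w) (c*v + d*w) = Int.gcd v w := by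
  apply Nat.dvd_antisymm
  · have hA := (Int.gcd_dvd_left _ _ : (↑(Int.gcd (a*v + b*w) (c*v + d*w)) : ℤ) ∣ _)
    have hB := (Int.gcd_dvd_right _ _ : (↑(Int.gcd (a*v + b*w) (c*v + d*w)) : ℤ) ∣ _)
    have h1 : (↑(Int.gcd (a*v + b*w) (c*v + d*w)) : ℤ) ∣ v := by
      have hd : (↑(Int.gcd (a*v + b*w) (c*v + d*w)) : ℤ) ∣ d*(a*v+b*w) - b*(c*v+d*w) :=
        dvd_sub (hA.mul_left d) (hB.mul_left b)
      rcases hdet with h|h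
      · have e : d*(a*v+b*w) - b*(c*v+d*w) = v := by linear_combination v*h
        rwa [e] at hd
      · have e : d*(a*v+b*w) - b*(c*v+d*w) = -v := by linear_combination v*h
        rw [e] at hd
        exact dvd_neg.mp hd
    have h2 : (↑(Int.gcd (a*v + b*w) (c*v + d*w)) : ℤ) ∣ w := by
      have hd : (↑(Int.gcd (a*v + b*w) (c*v + d*w)) : ℤ) ∣ a*(c*v+d*w) - c*(a*v+b*w) :=
        dvd_sub (hB.mul_left a) (hA.mul_left c)
      rcases hdet with h|h
      · have e : a*(c*v+d*w) - c*(a*v+b*w) = w := by linear_combination w*h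
        rwa [e] at hd
      · have e : a*(c*v+d*w) - c*(a*v+b*w) = -w := by linear_combination w*h
        rw [e] at hd
        exact dvd_neg.mp hd
    exact Int.natCast_dvd_natCast.mp (Int.dvd_coe_gcd h1 h2)
  · have hA := (Int.gcd_dvd_left _ _ : (↑(Int.gcd v w) : ℤ) ∣ _)
    have hB := (Int.gcd_dvd_right _ _ : (↑(Int.gcd v w) : ℤ) ∣ _)
    exact Int.natCast_dvd_natCast.mp (Int.dvd_coe_gcd
      (dvd_add (hA.mul_left a) (hB.mul_left b)) (dvd_add (hA.mul_left c) (hB.mul_left d)))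

lemma normalize_core (n : ℕ) (hn1 : 1 < n) (a1 a2 e1 e2 f1 f2 : ℤ)
    (hg1 : Int.gcd e1 e2 = 1) (hg2 : Int.gcd f1 f2 = 1)
    (hg3 : Int.gcd (f1 - e1) (f2 - e2) = 1)
    (hDn : (e1*f2 - e2*f1).natAbs = n) :
    ∃ m : ℕ, m < n ∧ 1 ≤ m ∧ Nat.Coprime m n ∧ Nat.Coprime (m-1) n ∧
      UnimodEquiv {(a1, a2), (a1+e1, a2+e2), (a1+f1, a2+f2)}
        {((0:ℤ),(0:ℤ)), ((1:ℤ),(0:ℤ)), (((m:ℕ):ℤ),((n:ℕ):ℤ))} := by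
  have hnz : (0:ℤ) < (n:ℤ) := by exact_mod_cast Nat.lt_of_lt_of_le Nat.zero_lt_one hn1.le
  obtain ⟨p, q, hpq⟩ := Int.isCoprime_iff_gcd_eq_one.mpr hg1
  obtain ⟨ε, hε, hεD⟩ : ∃ ε : ℤ, (ε = 1 ∨ ε = -1) ∧ ε * (e1*f2 - e2*f1) = (n:ℤ) := by
    have habs : ((e1*f2 - e2*f1).natAbs : ℤ) = (n:ℤ) := by rw [hDn]
    by_cases h0 : 0 ≤ e1*f2 - e2*f1
    · exact ⟨1, Or.inl rfl, by omega⟩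
    · exact ⟨-1, Or.inr rfl, by omega⟩
  obtain ⟨k, m', hm', hm0, hmn⟩ : ∃ k m' : ℤ,
      (p*f1 + q*f2) - k*(n:ℤ) = m' ∧ 0 ≤ m' ∧ m' < n := by
    refine ⟨(p*f1 + q*f2) / (n:ℤ), (p*f1 + q*f2) % (n:ℤ), ?_, Int.emod_nonneg _ hnz.ne',
      Int.emod_lt_of_pos _ hnz⟩
    rw [Int.emod_def]; ring
  set m : ℕ := m'.toNat with hmdef
  have hmz : (m:ℤ) = m' := Int.toNat_of_nonneg hm0
  have hdet : (p + k*ε*e2) * (ε*e1) - (q - k*ε*e1) * (-(ε*e2)) = 1 ∨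
      (p + k*ε*e2) * (ε*e1) - (q - k*ε*e1) * (-(ε*e2)) = -1 := by
    rcases hε with h|h
    · left; rw [h]; linear_combination hpq
    · right; rw [h]; linear_combination -hpq
  have e5a : (p + k*ε*e2)*f1 + (q - k*ε*e1)*f2 = m' := by
    linear_combination hm' - k*hεD
  have e5b : (-(ε*e2))*f1 + (ε*e1)*f2 = (n:ℤ) := by linear_combination hεD
  have e6a : (p + k*ε*e2)*(f1-e1) + (q - k*ε*e1)*(f2-e2) = m' - 1 := by
    linear_combination hm' - k*hεD - hpq
  have e6b : (-(ε*e2))*(f1-e1) + (ε*e1)*(f2-e2) = (n:ℤ) := by linear_combination hεD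
  have h5 := gcd_unimod_s15 (p + k*ε*e2) (q - k*ε*e1) (-(ε*e2)) (ε*e1) f1 f2 hdet
  rw [e5a, e5b, hg2] at h5
  have h6 := gcd_unimod_s15 (p + k*ε*e2) (q - k*ε*e1) (-(ε*e2)) (ε*e1) (f1-e1) (f2-e2) hdet
  rw [e6a, e6b, hg3] at h6
  have hm1 : 1 ≤ m := by
    by_contra hc
    have hm'0 : m' = 0 := by omega
    rw [hm'0] at h5
    rw [Int.gcd_zero_left] at h5
    simp at h5
    omega
  have hcop1 : Nat.Coprime m n := by
    have : Int.gcd m' ((n:ℕ):ℤ) = Nat.gcd m n := by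
      unfold Int.gcd
      congr 1 <;> omega
    rw [this] at h5
    exact h5
  have hcop2 : Nat.Coprime (m-1) n := by
    have : Int.gcd (m' - 1) ((n:ℕ):ℤ) = Nat.gcd (m-1) n := by
      unfold Int.gcd
      congr 1 <;> omega
    rw [this] at h6
    exact h6
  refine ⟨m, by omega, hm1, hcop1, hcop2,
    ⟨p + k*ε*e2, q - k*ε*e1, -(ε*e2), ε*e1,
      -((p + k*ε*e2)*a1 + (q - k*ε*e1)*a2), -((-(ε*e2))*a1 + (ε*e1)*a2), hdet, ?_⟩⟩
  rw [Set.image_insert_eq, Set.image_insert_eq, Set.image_singleton]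
  have P0 : ((p + k*ε*e2)*a1 + (q - k*ε*e1)*a2 + -((p + k*ε*e2)*a1 + (q - k*ε*e1)*a2),
      (-(ε*e2))*a1 + (ε*e1)*a2 + -((-(ε*e2))*a1 + (ε*e1)*a2)) = ((0:ℤ),(0:ℤ)) := by
    rw [Prod.mk.injEq]; exact ⟨by ring, by ring⟩
  have P1 : ((p + k*ε*e2)*(a1+e1) + (q - k*ε*e1)*(a2+e2) + -((p + k*ε*e2)*a1 + (q - k*ε*e1)*a2),
      (-(ε*e2))*(a1+e1) + (ε*e1)*(a2+e2) + -((-(ε*e2))*a1 + (ε*e1)*a2)) = ((1:ℤ),(0:ℤ)) := by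
    rw [Prod.mk.injEq]; exact ⟨by linear_combination hpq, by ring⟩
  have P2 : ((p + k*ε*e2)*(a1+f1) + (q - k*ε*e1)*(a2+f2) + -((p + k*ε*e2)*a1 + (q - k*ε*e1)*a2),
      (-(ε*e2))*(a1+f1) + (ε*e1)*(a2+f2) + -((-(ε*e2))*a1 + (ε*e1)*a2)) = (((m:ℕ):ℤ),((n:ℕ):ℤ)) := by
    rw [Prod.mk.injEq]
    exact ⟨by linear_combination hm' - k*hεD - hmz, by linear_combination hεD⟩
  exact P0 ▸ P1 ▸ P2 ▸ rfl

lemma normalize_tri (n : ℕ) (hn1 : 1 < n) (A B C : ℤ × ℤ)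
    (h1 : IsCleanTri A B C) (h2 : (triDet A B C).natAbs = n) :
    ∃ m : ℕ, m < n ∧ 1 ≤ m ∧ Nat.Coprime m n ∧ Nat.Coprime (m-1) n ∧
      UnimodEquiv {A, B, C} {((0:ℤ),(0:ℤ)), ((1:ℤ),(0:ℤ)), (((m:ℕ):ℤ),((n:ℕ):ℤ))} := by
  obtain ⟨hD, g1, g2, g3⟩ := h1
  have g3' : Int.gcd ((C.1-A.1) - (B.1-A.1)) ((C.2-A.2) - (B.2-A.2)) = 1 := by
    rw [show (C.1-A.1) - (B.1-A.1) = C.1 - B.1 by ring,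
      show (C.2-A.2) - (B.2-A.2) = C.2 - B.2 by ring]
    exact g3
  obtain ⟨m, hmn, hm1, hc1, hc2, hequiv⟩ :=
    normalize_core n hn1 A.1 A.2 (B.1-A.1) (B.2-A.2) (C.1-A.1) (C.2-A.2) g1 g2 g3' h2
  have eA : ((A.1 : ℤ), (A.2:ℤ)) = A := rfl
  have eB : ((A.1 + (B.1-A.1) : ℤ), (A.2 + (B.2-A.2):ℤ)) = B := by
    rw [Prod.ext_iff]; exact ⟨by ring, by ring⟩
  have eC : ((A.1 + (C.1-A.1) : ℤ), (A.2 + (C.2-A.2):ℤ)) = C := by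
    rw [Prod.ext_iff]; exact ⟨by ring, by ring⟩
  rw [eA, eB, eC] at hequiv
  exact ⟨m, hmn, hm1, hc1, hc2, hequiv⟩


section Glue

variable {n : ℕ}

def NS [NeZero n] (x : ZMod n) : Set (ℤ × ℤ) :=
  {((0:ℤ),(0:ℤ)), ((1:ℤ),(0:ℤ)), (((x.val:ℕ):ℤ),((n:ℕ):ℤ))}

lemma castz [NeZero n] (x : ZMod n) : ((((x.val:ℕ):ℤ)) : ZMod n) = x := by
  push_cast
  exact ZMod.natCast_rightInverse x

lemma castn [NeZero n] (x : ZMod n) : (((x.val:ℕ)) : ZMod n) = x :=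
  ZMod.natCast_rightInverse x

lemma rel_s [NeZero n] (x y : ZMod n) (h : y = 1 - x) : UnimodEquiv (NS x) (NS y) := by
  apply gen_s
  rw [← ZMod.intCast_zmod_eq_zero_iff_dvd]
  push_cast
  rw [castn, castn, h]
  ring

lemma rel_i [NeZero n] (x y : ZMod n) (h : x * y = 1) : UnimodEquiv (NS x) (NS y) := by
  apply gen_i
  rw [← ZMod.intCast_zmod_eq_zero_iff_dvd]
  push_cast
  rw [castn, castn, h]
  ring

lemma realize [NeZero n] (x y : ZMod n) (hx : POK x) (hy : y ∈ orbitSet x) :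
    UnimodEquiv (NS x) (NS y) := by
  have hxy : x * x⁻¹ = 1 := ZMod.mul_inv_of_unit x hx.1
  have h1x : (1-x) * (1-x)⁻¹ = 1 := ZMod.mul_inv_of_unit _ (pok_sub x hx).1
  simp only [orbitSet, Finset.mem_insert, Finset.mem_singleton] at hy
  rcases hy with rfl|h|h|h|h|h
  · exact unimod_refl _
  · exact rel_s x y h
  · exact h ▸ rel_i x x⁻¹ hxy
  · exact unimod_trans (rel_i x x⁻¹ hxy) (rel_s x⁻¹ y h)
  · exact h ▸ unimod_trans (rel_s x (1-x) rfl) (rel_i (1-x) (1-x)⁻¹ h1x)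
  · exact unimod_trans (unimod_trans (rel_s x (1-x) rfl) (rel_i (1-x) (1-x)⁻¹ h1x))
      (rel_s (1-x)⁻¹ y h)

lemma unique_orbit [NeZero n] (hn : 0 < n) (x y : ZMod n)
    (h : UnimodEquiv (NS x) (NS y)) : y ∈ orbitSet x := by
  have hsep := normal_sep n hn ((x.val:ℕ):ℤ) ((y.val:ℕ):ℤ) h
  rw [castz, castz] at hsep
  simp only [orbitSet, Finset.mem_insert, Finset.mem_singleton]
  rcases hsep with h'|h'|h'|h'|h'|h'
  · exact Or.inl h'
  · exact Or.inr (Or.inl h')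
  · have := ZMod.inv_eq_of_mul_eq_one n x y h'
    exact Or.inr (Or.inr (Or.inl this.symm))
  · have := ZMod.inv_eq_of_mul_eq_one n x (1-y) h'
    exact Or.inr (Or.inr (Or.inr (Or.inl (by linear_combination this))))
  · have := ZMod.inv_eq_of_mul_eq_one n (1-x) y h'
    exact Or.inr (Or.inr (Or.inr (Or.inr (Or.inl this.symm))))
  · have := ZMod.inv_eq_of_mul_eq_one n (1-x) (1-y) h'
    exact Or.inr (Or.inr (Or.inr (Or.inr (Or.inr (by linear_combination this)))))

lemma pok_of_coprimes [NeZero n] (hn1 : 1 < n) (m : ℕ) (hmn : m < n) (hm1 : 1 ≤ m)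
    (hc1 : Nat.Coprime m n) (hc2 : Nat.Coprime (m-1) n) :
    POK ((m : ZMod n)) ∧ ((m : ZMod n)).val = m := by
  have hval : ((m : ZMod n)).val = m := ZMod.val_cast_of_lt hmn
  refine ⟨⟨(ZMod.isUnit_iff_coprime m n).mpr hc1, ?_⟩, hval⟩
  have hc : (((m - 1 : ℕ)) : ZMod n) = (m : ZMod n) - 1 := by
    push_cast [hm1]
    ring
  rw [← hc]
  exact (ZMod.isUnit_iff_coprime (m-1) n).mpr hc2

lemma NT_spec [NeZero n] (hn1 : 1 < n) (x : ZMod n) (hx : POK x) :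
    IsCleanTri ((0:ℤ),(0:ℤ)) ((1:ℤ),(0:ℤ)) (((x.val:ℕ):ℤ),((n:ℕ):ℤ)) ∧
    (triDet ((0:ℤ),(0:ℤ)) ((1:ℤ),(0:ℤ)) (((x.val:ℕ):ℤ),((n:ℕ):ℤ))).natAbs = n := by
  haveI : Fact (1 < n) := ⟨hn1⟩
  have hval0 : x.val ≠ 0 := by
    intro hc
    have hx0 : x = 0 := (ZMod.val_eq_zero x).mp hc
    rw [hx0] at hx
    exact one_ne_zero (isUnit_zero_iff.mp hx.1).symm
  have hdet : triDet ((0:ℤ),(0:ℤ)) ((1:ℤ),(0:ℤ)) (((x.val:ℕ):ℤ),((n:ℕ):ℤ)) = (n:ℤ) := by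
    unfold triDet
    simp
  have hcast : ((x.val : ℕ) : ZMod n) = x := ZMod.natCast_rightInverse x
  have hcop1 : Nat.Coprime x.val n := (ZMod.isUnit_iff_coprime x.val n).mp (by rw [hcast]; exact hx.1)
  have hcop2 : Nat.Coprime (x.val - 1) n := by
    apply (ZMod.isUnit_iff_coprime (x.val - 1) n).mp
    have hc : (((x.val - 1 : ℕ)) : ZMod n) = x - 1 := by
      push_cast [Nat.one_le_iff_ne_zero.mpr hval0]
      rw [hcast]
    rw [hc]
    exact hx.2
  constructor
  · refine ⟨by rw [hdet]; exact_mod_cast (by omega : n ≠ 0), ?_, ?_, ?_⟩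
    · simp [Int.gcd]
    · show Int.gcd ((x.val:ℤ) - 0) ((n:ℤ) - 0) = 1
      rw [sub_zero, sub_zero]
      unfold Int.gcd
      have h1 : ((x.val:ℤ)).natAbs = x.val := by omega
      have h2 : ((n:ℤ):ℤ).natAbs = n := by omega
      rw [h1]
      simpa using hcop1
    · show Int.gcd ((x.val:ℤ) - 1) ((n:ℤ) - 0) = 1
      rw [sub_zero]
      unfold Int.gcd
      have h1 : ((x.val:ℤ) - 1).natAbs = x.val - 1 := by omega
      rw [h1]
      simpa using hcop2
  · rw [hdet]; simp

end Glue


/-- If `n` is odd and either `9 ∣ n` or some prime divisor of `n` is `≡ 5 (mod 6)`,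
then `𝒯(n) = (imph(n) + 3)/6`. -/
theorem triCount_case_one (n : ℕ) (hn : 0 < n) (hodd : Odd n)
    (h : 9 ∣ n ∨ ∃ p ∈ n.primeFactors, p % 6 = 5) :
    6 * TriCount n = imph n + 3 := by
  classical
  have hn1 : 1 < n := hyp_n_gt n hn h
  haveI : NeZero n := ⟨by omega⟩
  have hroot := hyp_root_free n hn h
  have h3 := hyp_three_ne n hn h
  have h2u := hyp_two_unit n hodd
  obtain ⟨xf, key⟩ : ∃ xf : CleanTri n → ZMod n, ∀ T : CleanTri n, POK (xf T) ∧
      UnimodEquiv {T.1.1, T.1.2.1, T.1.2.2} (NS (xf T)) := by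
    have spec : ∀ T : CleanTri n, ∃ m : ℕ, m < n ∧ 1 ≤ m ∧ Nat.Coprime m n ∧
        Nat.Coprime (m-1) n ∧ UnimodEquiv {T.1.1, T.1.2.1, T.1.2.2}
          {((0:ℤ),(0:ℤ)), ((1:ℤ),(0:ℤ)), (((m:ℕ):ℤ),((n:ℕ):ℤ))} :=
      fun T => normalize_tri n hn1 T.1.1 T.1.2.1 T.1.2.2 T.2.1 T.2.2
    refine ⟨fun T => (((spec T).choose : ℕ) : ZMod n), fun T => ?_⟩
    obtain ⟨hmn, hm1, hc1, hc2, hequiv⟩ := (spec T).choose_spec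
    obtain ⟨hpok, hval⟩ := pok_of_coprimes hn1 _ hmn hm1 hc1 hc2
    refine ⟨hpok, ?_⟩
    have hNS : NS ((((spec T).choose : ℕ) : ZMod n))
        = {((0:ℤ),(0:ℤ)), ((1:ℤ),(0:ℤ)), ((((spec T).choose:ℕ):ℤ),((n:ℕ):ℤ))} := by
      unfold NS
      rw [hval]
    rw [hNS]
    exact hequiv
  have gmem : ∀ T : CleanTri n, orbitSet (xf T) ∈ (okSet n).image orbitSet := fun T =>
    Finset.mem_image_of_mem _ (mem_okSet.mpr (key T).1)
  have hcardeq : TriCount n = ((okSet n).image orbitSet).card := by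
    unfold TriCount
    rw [Nat.card_eq_of_bijective
      (Quot.lift (fun T : CleanTri n =>
          (⟨orbitSet (xf T), gmem T⟩ : {o // o ∈ (okSet n).image orbitSet}))
        (fun T₁ T₂ hT => Subtype.ext (by
          have hNS : UnimodEquiv (NS (xf T₁)) (NS (xf T₂)) :=
            unimod_trans (unimod_symm (key T₁).2) (unimod_trans hT (key T₂).2)
          exact (orbit_inv _ _ (key T₁).1 (unique_orbit hn (xf T₁) (xf T₂) hNS)).symm)))
      ⟨?_, ?_⟩, Nat.card_eq_finsetCard]
    · intro q₁ q₂ hq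
      induction q₁ using Quot.ind with | _ T₁ => ?_
      induction q₂ using Quot.ind with | _ T₂ => ?_
      have hgg : orbitSet (xf T₁) = orbitSet (xf T₂) := congrArg Subtype.val hq
      have hmem : xf T₂ ∈ orbitSet (xf T₁) := by
        rw [hgg]
        exact mem_orbitSet_self _
      have hNS : UnimodEquiv (NS (xf T₁)) (NS (xf T₂)) := realize _ _ (key T₁).1 hmem
      apply Quot.sound
      exact unimod_trans (key T₁).2 (unimod_trans hNS (unimod_symm (key T₂).2))
    · rintro ⟨o, ho⟩
      obtain ⟨x, hxS, rfl⟩ := Finset.mem_image.mp ho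
      have hx : POK x := mem_okSet.mp hxS
      obtain ⟨hclean, hdet⟩ := NT_spec hn1 x hx
      refine ⟨Quot.mk _ (⟨(((0:ℤ),(0:ℤ)), ((1:ℤ),(0:ℤ)), (((x.val:ℕ):ℤ),((n:ℕ):ℤ))),
        hclean, hdet⟩ : CleanTri n), ?_⟩
      apply Subtype.ext
      show orbitSet (xf _) = orbitSet x
      have hVT : UnimodEquiv (NS x)
          (NS (xf ⟨(((0:ℤ),(0:ℤ)), ((1:ℤ),(0:ℤ)), (((x.val:ℕ):ℤ),((n:ℕ):ℤ))), hclean, hdet⟩)) :=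
        (key ⟨(((0:ℤ),(0:ℤ)), ((1:ℤ),(0:ℤ)), (((x.val:ℕ):ℤ),((n:ℕ):ℤ))), hclean, hdet⟩).2
      exact orbit_inv x _ hx (unique_orbit hn x _ hVT)
  rw [hcardeq, imph_eq_card_s15 n hn1]
  have := count_orbits n hroot h3 h2u
  omega
end
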